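/- arXiv:2211.03291 — 7 statements merged into one kernel-verified Lean document; each statement's English description precedes it below -/
import Mathlib

section
/- Let k ≥ 2, let G be a graph with a proper edge coloring φ, and for 1 ≤ t ≤ 2k−1 let F_t denote the set of closed 2k-walks in G that are color-degenerate at (0, t). Then for every 1 ≤ t ≤ 2k−1, |F_t|² ≤ |F₁| · |F_{2t−1}|, where the index 2t−1 is taken modulo 2k (so F_{2t−1} means F_{2t−2k+1} when 2t−1 > 2k−1). -/
/-- The set of closed `2k`-walks `v₀v₁⋯v_{2k}` in `G` (with `v₀ = v_{2k}`, encoded as maps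
`ZMod (2k) → V` with consecutive vertices adjacent) that are color-degenerate at `(0, t)`,
i.e. satisfy `φ(v₀v₁) = φ(v_t v_{t+1})` (indices taken modulo `2k`). -/
def ColorDegWalk {V C : Type*} (G : SimpleGraph V) (φ : Sym2 V → C) (k t : ℕ) : Type _ :=
  {v : ZMod (2 * k) → V // (∀ i, G.Adj (v i) (v (i + 1))) ∧
    φ s(v 0, v 1) = φ s(v (t : ZMod (2 * k)), v ((t : ZMod (2 * k)) + 1))}

open Finset Matrix
open scoped Classical

set_option linter.unusedSectionVars false

section Aux
variable {V C : Type*} [Fintype V] (G : SimpleGraph V) (φ : Sym2 V → C)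

/-- paths of length ℓ from x to y, encoded as functions. -/
def PathT (ℓ : ℕ) (x y : V) : Type _ :=
  {w : Fin (ℓ+1) → V // w 0 = x ∧ w (Fin.last ℓ) = y ∧
    ∀ i : Fin ℓ, G.Adj (w i.castSucc) (w i.succ)}

noncomputable def Amat : Matrix V V ℝ := Matrix.of fun x y => if G.Adj x y then 1 else 0

lemma Apow_symm (ℓ : ℕ) (x y : V) : (Amat G ^ ℓ) x y = (Amat G ^ ℓ) y x := by
  have hs : (Amat G).IsSymm := by ext x y; simp [Amat, G.adj_comm]
  have h := hs.pow ℓ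
  exact (Matrix.IsSymm.apply h y x).symm ▸ rfl

instance (ℓ : ℕ) (x y : V) : Finite (PathT G ℓ x y) := by
  unfold PathT; infer_instance

lemma nat_card_plift (P : Prop) : (Nat.card (PLift P) : ℝ) = if P then 1 else 0 := by
  split_ifs with h
  · haveI : Unique (PLift P) := ⟨⟨⟨h⟩⟩, fun a => rfl⟩
    simp [Nat.card_unique]
  · haveI : IsEmpty (PLift P) := ⟨fun a => h a.down⟩
    simp

lemma nat_card_sigma {ι : Type*} [Fintype ι] (f : ι → Type*) [∀ i, Finite (f i)] :
    Nat.card (Sigma f) = ∑ i, Nat.card (f i) := by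
  haveI : ∀ i, Fintype (f i) := fun i => Fintype.ofFinite _
  simp only [Nat.card_eq_fintype_card]
  convert Fintype.card_sigma <;> exact Subsingleton.elim _ _

lemma card_pathT_zero (x y : V) :
    (Nat.card (PathT G 0 x y) : ℝ) = if x = y then 1 else 0 := by
  have hlast : (Fin.last 0) = (0 : Fin 1) := rfl
  split_ifs with h
  · haveI : Unique (PathT G 0 x y) :=
      { default := ⟨fun _ => x, rfl, h ▸ rfl, fun i => i.elim0⟩
        uniq := by
          rintro ⟨w, h0, hl, _⟩
          apply Subtype.ext
          funext j
          have hj : j = 0 := Fin.ext (by omega)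
          show w j = x
          rw [hj]; exact h0 }
    simp [Nat.card_unique]
  · haveI : IsEmpty (PathT G 0 x y) := by
      refine ⟨fun w => h ?_⟩
      have h1 := w.2.1
      have h2 : w.1 0 = y := w.2.2.1
      exact h1.symm.trans h2
    simp

lemma card_pathT_succ (ℓ : ℕ) (x y : V) :
    Nat.card (PathT G (ℓ+1) x y) =
      Nat.card (Σ z : V, PLift (G.Adj x z) × PathT G ℓ z y) := by
  apply (Nat.card_eq_of_bijective
    (fun p : Σ z : V, PLift (G.Adj x z) × PathT G ℓ z y =>
      (⟨Fin.cons x p.2.2.1, by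
          refine ⟨Fin.cons_zero _ _, ?_, ?_⟩
          · rw [← Fin.succ_last, Fin.cons_succ]
            exact p.2.2.2.2.1
          · intro i
            induction i using Fin.cases with
            | zero =>
              simp only [Fin.castSucc_zero, Fin.cons_zero, Fin.succ_zero_eq_one]
              rw [show (1 : Fin (ℓ+2)) = Fin.succ 0 from (Fin.succ_zero_eq_one).symm,
                Fin.cons_succ, p.2.2.2.1]
              exact p.2.1.down
            | succ j =>
              rw [← Fin.succ_castSucc, Fin.cons_succ, Fin.cons_succ]
              exact p.2.2.2.2.2 j⟩ : PathT G (ℓ+1) x y)) ?_).symm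
  constructor
  · rintro ⟨z, h, ⟨f, hf0, hfl, hfa⟩⟩ ⟨z', h', ⟨f', hf0', hfl', hfa'⟩⟩ heq
    have hff : (Fin.cons x f : Fin (ℓ+2) → V) = Fin.cons x f' := by
      have := congrArg Subtype.val heq
      simpa using this
    have hf : f = f' := by
      funext i
      have := congrFun hff i.succ
      rwa [Fin.cons_succ, Fin.cons_succ] at this
    subst hf
    subst hf0
    have hz : z' = f 0 := hf0'.symm
    subst hz
    cases h; cases h'
    rfl
  · rintro ⟨w, h0, hl, ha⟩
    have hadj : G.Adj x (w 1) := by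
      have := ha 0
      rwa [Fin.castSucc_zero, h0, Fin.succ_zero_eq_one] at this
    refine ⟨⟨w 1, ⟨hadj⟩, ⟨fun i => w i.succ, rfl, ?_, ?_⟩⟩, ?_⟩
    · show w (Fin.last ℓ).succ = y
      rw [Fin.succ_last]; exact hl
    · intro i
      show G.Adj (w i.castSucc.succ) (w i.succ.succ)
      have := ha i.succ
      rwa [← Fin.succ_castSucc] at this
    · apply Subtype.ext
      show Fin.cons x (fun i => w i.succ) = w
      rw [← h0]
      exact Fin.cons_self_tail w

lemma card_pathT (ℓ : ℕ) (x y : V) :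
    (Nat.card (PathT G ℓ x y) : ℝ) = (Amat G ^ ℓ) x y := by
  induction ℓ generalizing x y with
  | zero => rw [card_pathT_zero, pow_zero, Matrix.one_apply]
  | succ ℓ ih =>
    rw [card_pathT_succ, nat_card_sigma]
    push_cast
    rw [pow_succ', Matrix.mul_apply]
    congr 1
    funext z
    rw [Nat.card_prod]
    push_cast
    rw [nat_card_plift, ih]
    simp [Amat]
end Aux

section Glue
variable {V C : Type*} [Fintype V] {G : SimpleGraph V} {φ : Sym2 V → C}

lemma pathT_adj {ℓ : ℕ} {x y : V} (W : PathT G ℓ x y) (u v : ℕ) (hu : u < ℓ)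
    (hv : v = u + 1) (hu' : u < ℓ+1) (hv' : v < ℓ+1) :
    G.Adj (W.1 ⟨u, hu'⟩) (W.1 ⟨v, hv'⟩) := by
  subst hv; exact W.2.2.2 ⟨u, hu⟩

lemma pathT_last {ℓ : ℕ} {x y : V} (W : PathT G ℓ x y) (u : ℕ) (hu : u = ℓ)
    (hu' : u < ℓ+1) : W.1 ⟨u, hu'⟩ = y := by
  subst hu; exact W.2.2.1

lemma pathT_zero {ℓ : ℕ} {x y : V} (W : PathT G ℓ x y) (hu' : 0 < ℓ+1) :
    W.1 ⟨0, hu'⟩ = x := by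
  rw [Fin.mk_zero]; exact W.2.1

lemma pathT_zero' {ℓ : ℕ} {x y : V} (W : PathT G ℓ x y) (u : ℕ) (hu : u = 0)
    (hu' : u < ℓ+1) : W.1 ⟨u, hu'⟩ = x := by
  subst hu; exact pathT_zero W _

def glue (V : Type*) (n p q : ℕ) (a : V) (P : Fin (p+1) → V) (Q : Fin (q+1) → V) : ZMod n → V :=
  fun j => if h1 : j.val = 0 then a else if h2 : j.val ≤ p+1 then P ⟨j.val - 1, by omega⟩
    else Q ⟨min (j.val - (p+2)) q, Nat.lt_succ_of_le (min_le_right _ _)⟩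

variable {n p q : ℕ} {a : V} {P : Fin (p+1) → V} {Q : Fin (q+1) → V}

lemma glue_zero [NeZero n] : glue V n p q a P Q 0 = a := by
  unfold glue
  rw [dif_pos ZMod.val_zero]

lemma glue_cast [NeZero n] (m : ℕ) (hm : m < n) :
    glue V n p q a P Q (↑m) = if h1 : m = 0 then a
      else if h2 : m ≤ p+1 then P ⟨m - 1, by omega⟩
      else Q ⟨min (m - (p+2)) q, Nat.lt_succ_of_le (min_le_right _ _)⟩ := by
  unfold glue
  have hv : ((m : ZMod n)).val = m := ZMod.val_cast_of_lt hm
  simp only [hv]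

lemma glue_mid [NeZero n] (m : ℕ) (hm : m < n) (h1 : 1 ≤ m) (h2 : m ≤ p+1)
    (h2' : m - 1 < p + 1) :
    glue V n p q a P Q (↑m) = P ⟨m - 1, h2'⟩ := by
  rw [glue_cast m hm, dif_neg (by omega), dif_pos h2]

lemma glue_late [NeZero n] (m : ℕ) (hm : m < n) (h1 : p+2 ≤ m) (h2 : m - (p+2) ≤ q)
    (h2' : m - (p+2) < q + 1) :
    glue V n p q a P Q (↑m) = Q ⟨m - (p+2), h2'⟩ := by
  rw [glue_cast m hm, dif_neg (by omega), dif_neg (by omega)]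
  congr 1
  exact Fin.ext (by simp [min_eq_left h2])

end Glue

section Split
variable {V C : Type*} [Fintype V] {G : SimpleGraph V} {φ : Sym2 V → C}

def Quad (G : SimpleGraph V) (φ : Sym2 V → C) (p q : ℕ) : Type _ :=
  Σ x : (V × V) × (V × V),
    PLift (G.Adj x.1.1 x.1.2 ∧ G.Adj x.2.1 x.2.2 ∧ φ s(x.1.1, x.1.2) = φ s(x.2.1, x.2.2)) ×
      PathT G p x.1.2 x.2.1 × PathT G q x.2.2 x.1.1

lemma glue_adj {k p q : ℕ} (hpq : p + q + 2 = 2*k) {a b c d : V}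
    (hab : G.Adj a b) (hcd : G.Adj c d) (P : PathT G p b c) (Q : PathT G q d a) :
    haveI : NeZero (2*k) := ⟨by omega⟩
    ∀ i : ZMod (2*k), G.Adj (glue V (2*k) p q a P.1 Q.1 i)
      (glue V (2*k) p q a P.1 Q.1 (i + 1)) := by
  haveI : NeZero (2*k) := ⟨by omega⟩
  intro i
  have hm : i.val < 2*k := ZMod.val_lt i
  have hi : ((i.val : ℕ) : ZMod (2*k)) = i := ZMod.natCast_rightInverse i
  set m := i.val with hmdef
  by_cases hm1 : m + 1 < 2*k
  · have hi1 : i + 1 = ((m + 1 : ℕ) : ZMod (2*k)) := by rw [← hi]; push_cast; ring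
    rw [hi1, ← hi]
    rcases Nat.eq_zero_or_pos m with h0 | h1
    · rw [h0]
      rw [show ((0 : ℕ) : ZMod (2*k)) = 0 from Nat.cast_zero, glue_zero,
        glue_mid 1 (by omega) le_rfl (by omega) (by omega)]
      rw [pathT_zero P]
      exact hab
    · by_cases hP : m ≤ p
      · rw [glue_mid m hm h1 (by omega) (by omega),
          glue_mid (m+1) hm1 (by omega) (by omega) (by omega)]
        exact pathT_adj P (m-1) (m+1-1) (by omega) (by omega) _ _
      · by_cases hJ : m = p+1
        · rw [glue_mid m hm h1 (by omega) (by omega),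
            glue_late (m+1) hm1 (by omega) (by omega) (by omega)]
          rw [pathT_last P (m-1) (by omega), pathT_zero' Q (m+1-(p+2)) (by omega)]
          exact hcd
        · rw [glue_late m hm (by omega) (by omega) (by omega),
            glue_late (m+1) hm1 (by omega) (by omega) (by omega)]
          exact pathT_adj Q (m-(p+2)) (m+1-(p+2)) (by omega) (by omega) _ _
  · -- wrap around : m + 1 = 2*k
    have hi1 : i + 1 = 0 := by
      rw [← hi]
      have : ((m + 1 : ℕ) : ZMod (2*k)) = 0 := by
        rw [show m + 1 = 2*k by omega]; exact_mod_cast ZMod.natCast_self (2*k)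
      push_cast at this ⊢
      linear_combination this
    rw [hi1, glue_zero, ← hi]
    rcases Nat.eq_zero_or_pos q with hq | hq
    · subst hq
      have hda : d = a := (Q.2.1).symm.trans Q.2.2.1
      rw [glue_mid m hm (by omega) (by omega) (by omega)]
      rw [pathT_last P (m-1) (by omega)]
      exact hda ▸ hcd
    · rw [glue_late m hm (by omega) (by omega) (by omega)]
      have hlast : Q.1 ⟨q, by omega⟩ = a := pathT_last Q q rfl (by omega)
      have hstep := pathT_adj Q (m-(p+2)) q (by omega) (by omega) (by omega) (by omega)
      rwa [hlast] at hstep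

end Split

section Split2
variable {V C : Type*} [Fintype V] {G : SimpleGraph V} {φ : Sym2 V → C}

lemma glue_color {k p q : ℕ} (hpq : p + q + 2 = 2*k) {a b c d : V}
    (hco : φ s(a, b) = φ s(c, d)) (P : PathT G p b c) (Q : PathT G q d a) :
    haveI : NeZero (2*k) := ⟨by omega⟩
    φ s(glue V (2*k) p q a P.1 Q.1 0, glue V (2*k) p q a P.1 Q.1 1) =
      φ s(glue V (2*k) p q a P.1 Q.1 ((p+1 : ℕ) : ZMod (2*k)),
          glue V (2*k) p q a P.1 Q.1 (((p+1 : ℕ) : ZMod (2*k)) + 1)) := by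
  haveI : NeZero (2*k) := ⟨by omega⟩
  have e0 : glue V (2*k) p q a P.1 Q.1 0 = a := glue_zero
  have e1 : glue V (2*k) p q a P.1 Q.1 1 = b := by
    rw [show (1 : ZMod (2*k)) = ((1:ℕ) : ZMod (2*k)) from (Nat.cast_one).symm,
      glue_mid 1 (by omega) le_rfl (by omega) (by omega)]
    exact pathT_zero' P (1-1) (by omega) _
  have ec : glue V (2*k) p q a P.1 Q.1 ((p+1 : ℕ) : ZMod (2*k)) = c := by
    rw [glue_mid (p+1) (by omega) (by omega) le_rfl (by omega)]
    exact pathT_last P (p+1-1) (by omega) _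
  have ed : glue V (2*k) p q a P.1 Q.1 (((p+1 : ℕ) : ZMod (2*k)) + 1) = d := by
    rcases Nat.eq_zero_or_pos q with hq | hq
    · subst hq
      have hcast : ((p+1 : ℕ) : ZMod (2*k)) + 1 = 0 := by
        have h2 : ((p+2 : ℕ) : ZMod (2*k)) = 0 := by
          rw [show p + 2 = 2*k by omega]; exact ZMod.natCast_self _
        push_cast at h2 ⊢
        linear_combination h2
      rw [hcast, glue_zero]
      exact ((Q.2.2.1).symm.trans Q.2.1)
    · have hcast : ((p+1 : ℕ) : ZMod (2*k)) + 1 = ((p+2 : ℕ) : ZMod (2*k)) := by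
        push_cast; ring
      rw [hcast, glue_late (p+2) (by omega) le_rfl (by omega) (by omega)]
      exact pathT_zero' Q (p+2-(p+2)) (by omega) _
  rw [e0, e1, ec, ed]
  exact hco

lemma card_cdw {k p q : ℕ} (hpq : p + q + 2 = 2*k) :
    Nat.card (ColorDegWalk G φ k (p+1)) = Nat.card (Quad G φ p q) := by
  haveI : NeZero (2*k) := ⟨by omega⟩
  apply (Nat.card_eq_of_bijective (fun X : Quad G φ p q =>
    (⟨glue V (2*k) p q X.1.1.1 X.2.2.1.1 X.2.2.2.1,
      glue_adj hpq X.2.1.down.1 X.2.1.down.2.1 X.2.2.1 X.2.2.2,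
      glue_color hpq X.2.1.down.2.2 X.2.2.1 X.2.2.2⟩ : ColorDegWalk G φ k (p+1)))
    ?_).symm
  constructor
  · rintro ⟨⟨⟨a,b⟩,⟨c,d⟩⟩, ⟨h⟩, P, Q⟩ ⟨⟨⟨a',b'⟩,⟨c',d'⟩⟩, ⟨h'⟩, P', Q'⟩ heq
    have hv : glue V (2*k) p q a P.1 Q.1 = glue V (2*k) p q a' P'.1 Q'.1 := by
      have := congrArg Subtype.val heq
      simpa using this
    have ea : a = a' := by
      have := congrFun hv 0
      rwa [glue_zero, glue_zero] at this
    have eP : P.1 = P'.1 := by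
      funext i
      have hb : 1 + i.val < 2*k := by have := i.isLt; omega
      have h := congrFun hv ↑(1+i.val)
      rw [glue_mid (1+i.val) hb (by omega) (by omega) (by omega),
        glue_mid (1+i.val) hb (by omega) (by omega) (by omega)] at h
      have hidx : (⟨1+i.val-1, by omega⟩ : Fin (p+1)) = i := Fin.ext (by simp)
      rwa [hidx] at h
    have eQ : Q.1 = Q'.1 := by
      funext i
      by_cases hiq : i.val < q
      · have hb : p+2+i.val < 2*k := by omega
        have h := congrFun hv ↑(p+2+i.val)
        rw [glue_late (p+2+i.val) hb (by omega) (by omega) (by omega),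
          glue_late (p+2+i.val) hb (by omega) (by omega) (by omega)] at h
        have hidx : (⟨p+2+i.val-(p+2), by omega⟩ : Fin (q+1)) = i := Fin.ext (by simp)
        rwa [hidx] at h
      · have hiq' : i.val = q := by have := i.isLt; omega
        have hi : i = ⟨q, by omega⟩ := Fin.ext (by simp [hiq'])
        rw [hi, pathT_last Q q rfl, pathT_last Q' q rfl]
        exact ea
    have eb : b = b' := by
      have h1 : P.1 ⟨0, by omega⟩ = b := pathT_zero P _
      have h2 : P'.1 ⟨0, by omega⟩ = b' := pathT_zero P' _
      rw [eP] at h1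
      exact h1.symm.trans h2
    have ec : c = c' := by
      have h1 : P.1 ⟨p, by omega⟩ = c := pathT_last P p rfl _
      have h2 : P'.1 ⟨p, by omega⟩ = c' := pathT_last P' p rfl _
      rw [eP] at h1
      exact h1.symm.trans h2
    have ed : d = d' := by
      have h1 : Q.1 ⟨0, by omega⟩ = d := pathT_zero Q _
      have h2 : Q'.1 ⟨0, by omega⟩ = d' := pathT_zero Q' _
      rw [eQ] at h1
      exact h1.symm.trans h2
    subst ea; subst eb; subst ec; subst ed
    have ePP : P = P' := Subtype.ext eP
    have eQQ : Q = Q' := Subtype.ext eQ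
    subst ePP; subst eQQ
    rfl
  · rintro ⟨v, hadj, hcol⟩
    have hP0 : v ((1:ℕ) : ZMod (2*k)) = v 1 := by rw [Nat.cast_one]
    refine ⟨⟨((v 0, v 1), (v ((p+1:ℕ) : ZMod (2*k)), v (((p+1:ℕ) : ZMod (2*k)) + 1))),
      ⟨⟨by simpa using hadj 0, hadj _, hcol⟩⟩,
      ⟨fun i => v ↑(1+i.val), by simpa using hP0, ?_, ?_⟩,
      ⟨fun i => v ↑(p+2+i.val), ?_, ?_, ?_⟩⟩, ?_⟩
    · show v ↑(1+p) = v ((p+1:ℕ) : ZMod (2*k))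
      exact congrArg v (by push_cast; ring)
    · intro i
      show G.Adj (v ↑(1+i.val)) (v ↑(1+(i.val+1)))
      have h := hadj ↑(1+i.val)
      have : ((1+i.val : ℕ) : ZMod (2*k)) + 1 = ((1+(i.val+1) : ℕ) : ZMod (2*k)) := by
        push_cast; ring
      rwa [this] at h
    · show v ↑(p+2+0) = v (((p+1:ℕ) : ZMod (2*k)) + 1)
      exact congrArg v (by push_cast; ring)
    · show v ↑(p+2+q) = v 0
      exact congrArg v (by rw [show p+2+q = 2*k by omega]; exact ZMod.natCast_self _)
    · intro i
      show G.Adj (v ↑(p+2+i.val)) (v ↑(p+2+(i.val+1)))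
      have h := hadj ↑(p+2+i.val)
      have : ((p+2+i.val : ℕ) : ZMod (2*k)) + 1 = ((p+2+(i.val+1) : ℕ) : ZMod (2*k)) := by
        push_cast; ring
      rwa [this] at h
    · apply Subtype.ext
      funext j
      show glue V (2*k) p q (v 0) (fun i => v ↑(1+i.val)) (fun i => v ↑(p+2+i.val)) j = v j
      have hm : j.val < 2*k := ZMod.val_lt j
      have hj : ((j.val : ℕ) : ZMod (2*k)) = j := ZMod.natCast_rightInverse j
      rw [← hj]
      rcases Nat.eq_zero_or_pos j.val with h0 | h1
      · rw [h0, Nat.cast_zero, glue_zero]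
      · by_cases h2 : j.val ≤ p+1
        · rw [glue_mid j.val hm h1 h2 (by omega)]
          exact congrArg v (by rw [show 1+(j.val-1) = j.val by omega])
        · rw [glue_late j.val hm (by omega) (by omega) (by omega)]
          exact congrArg v (by rw [show p+2+(j.val-(p+2)) = j.val by omega])
end Split2

section Forms
variable {V C : Type*} [Fintype V] (G : SimpleGraph V) (φ : Sym2 V → C)

lemma Amat_isSymm : (Amat G).IsSymm := by
  ext x y; simp [Amat, G.adj_comm]

lemma Apow_transpose (ℓ : ℕ) : (Amat G ^ ℓ)ᵀ = Amat G ^ ℓ := (Amat_isSymm G).pow ℓ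

noncomputable def EM (χ : C) : Matrix V V ℝ :=
  Matrix.of fun a b => if G.Adj a b ∧ φ s(a, b) = χ then 1 else 0

noncomputable def Dmat (a b c d : V) : ℝ :=
  if G.Adj a b ∧ G.Adj c d ∧ φ s(a, b) = φ s(c, d) then 1 else 0

noncomputable def colset : Finset C := Finset.univ.image fun pr : V × V => φ s(pr.1, pr.2)

lemma EM_transpose (χ : C) : (EM G φ χ)ᵀ = EM G φ χ := by
  ext a b
  simp only [Matrix.transpose_apply, EM, Matrix.of_apply]
  rw [G.adj_comm, Sym2.eq_swap]

lemma Dmat_eq_sum (a b c d : V) :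
    Dmat G φ a b c d = ∑ χ ∈ colset φ, EM G φ χ a b * EM G φ χ c d := by
  by_cases hP : G.Adj a b ∧ G.Adj c d ∧ φ s(a, b) = φ s(c, d)
  · rw [Finset.sum_eq_single (φ s(a, b))]
    · rw [Dmat, if_pos hP]
      symm
      show (if G.Adj a b ∧ φ s(a,b) = φ s(a,b) then (1:ℝ) else 0) *
        (if G.Adj c d ∧ φ s(c,d) = φ s(a,b) then (1:ℝ) else 0) = 1
      rw [if_pos ⟨hP.1, rfl⟩, if_pos ⟨hP.2.1, hP.2.2.symm⟩, mul_one]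
    · intro χ _ hne
      have hn : ¬(φ s(a, b) = χ) := fun h => hne h.symm
      simp [EM, hn]
    · intro h
      exact absurd (Finset.mem_image.mpr ⟨(a, b), Finset.mem_univ _, rfl⟩) h
  · rw [Dmat, if_neg hP]
    symm
    apply Finset.sum_eq_zero
    intro χ _
    by_cases h1 : G.Adj a b ∧ φ s(a, b) = χ
    · by_cases h2 : G.Adj c d ∧ φ s(c, d) = χ
      · exact absurd ⟨h1.1, h2.1, h1.2.trans h2.2.symm⟩ hP
      · simp [EM, h2]
    · simp [EM, h1]

noncomputable def Fform (p q : ℕ) : ℝ :=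
  ∑ χ ∈ colset φ, (EM G φ χ * (Amat G ^ p * (EM G φ χ * Amat G ^ q))).trace

lemma Fform_comm (p q : ℕ) : Fform G φ p q = Fform G φ q p := by
  apply Finset.sum_congr rfl
  intro χ _
  rw [← mul_assoc, Matrix.trace_mul_comm, mul_assoc]

lemma trace_eq_sum (M : Matrix V V ℝ) : M.trace = ∑ x : V, M x x := rfl

lemma quad_form (p q : ℕ) :
    (Nat.card (Quad G φ p q) : ℝ) = Fform G φ p q := by
  have step1 : (Nat.card (Quad G φ p q) : ℝ) =
      ∑ a, ∑ b, ∑ c, ∑ d, Dmat G φ a b c d * (Amat G ^ p) b c * (Amat G ^ q) d a := by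
    rw [show Quad G φ p q = (Σ x : (V × V) × (V × V),
      PLift (G.Adj x.1.1 x.1.2 ∧ G.Adj x.2.1 x.2.2 ∧ φ s(x.1.1, x.1.2) = φ s(x.2.1, x.2.2)) ×
        (PathT G p x.1.2 x.2.1 × PathT G q x.2.2 x.1.1)) from rfl, nat_card_sigma]
    push_cast
    simp only [Fintype.sum_prod_type]
    refine Finset.sum_congr rfl fun a _ => Finset.sum_congr rfl fun b _ =>
      Finset.sum_congr rfl fun c _ => Finset.sum_congr rfl fun d _ => ?_
    rw [Nat.card_prod, Nat.card_prod]
    push_cast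
    rw [nat_card_plift, card_pathT, card_pathT]
    simp only [Dmat, mul_assoc]
    by_cases h : G.Adj a b ∧ G.Adj c d ∧ φ s(a, b) = φ s(c, d) <;> simp [h]
  rw [step1]
  unfold Fform
  simp only [trace_eq_sum, Matrix.mul_apply, Finset.mul_sum]
  simp only [Dmat_eq_sum, Finset.sum_mul]
  simp_rw [Finset.sum_comm (s := (Finset.univ : Finset V)) (t := colset φ)]
  refine Finset.sum_congr rfl fun χ _ => Finset.sum_congr rfl fun a _ =>
    Finset.sum_congr rfl fun b _ => Finset.sum_congr rfl fun c _ =>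
      Finset.sum_congr rfl fun d _ => ?_
  ring

lemma cdw_form {k p q : ℕ} (hpq : p + q + 2 = 2*k) :
    (Nat.card (ColorDegWalk G φ k (p+1)) : ℝ) = Fform G φ p q := by
  rw [card_cdw hpq, quad_form]

lemma cs_e1 (p m : ℕ) :
    ∑ z ∈ colset φ ×ˢ ((Finset.univ : Finset V) ×ˢ Finset.univ),
      ((Amat G ^ m * (EM G φ z.1 * Amat G ^ p)) z.2.1 z.2.2 *
        (EM G φ z.1 * Amat G ^ (p + m)) z.2.2 z.2.1) = Fform G φ p (p + 2*m) := by
  rw [Finset.sum_product]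
  refine Finset.sum_congr rfl fun χ _ => ?_
  rw [Finset.sum_product]
  dsimp only
  simp_rw [← Matrix.mul_apply]
  rw [show (∑ x : V, ((Amat G ^ m * (EM G φ χ * Amat G ^ p)) * (EM G φ χ * Amat G ^ (p + m))) x x)
      = ((Amat G ^ m * (EM G φ χ * Amat G ^ p)) * (EM G φ χ * Amat G ^ (p + m))).trace from rfl]
  rw [mul_assoc, Matrix.trace_mul_comm]
  congr 1
  simp only [mul_assoc]
  rw [← pow_add, show p + m + m = p + 2*m by ring]

lemma cs_e2 (p m : ℕ) :
    ∑ z ∈ colset φ ×ˢ ((Finset.univ : Finset V) ×ˢ Finset.univ),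
      ((Amat G ^ m * (EM G φ z.1 * Amat G ^ p)) z.2.1 z.2.2) ^ 2
      = Fform G φ (2*p) (2*m) := by
  rw [Finset.sum_product]
  refine Finset.sum_congr rfl fun χ _ => ?_
  rw [Finset.sum_product]
  dsimp only
  simp_rw [pow_two]
  have hrw : ∀ (x c : V), (Amat G ^ m * (EM G φ χ * Amat G ^ p)) x c *
      (Amat G ^ m * (EM G φ χ * Amat G ^ p)) x c
      = (Amat G ^ m * (EM G φ χ * Amat G ^ p)) x c *
        ((Amat G ^ m * (EM G φ χ * Amat G ^ p))ᵀ) c x := fun _ _ => rfl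
  simp_rw [hrw, ← Matrix.mul_apply]
  rw [show (∑ x : V, ((Amat G ^ m * (EM G φ χ * Amat G ^ p)) *
      ((Amat G ^ m * (EM G φ χ * Amat G ^ p))ᵀ)) x x)
      = ((Amat G ^ m * (EM G φ χ * Amat G ^ p)) *
        ((Amat G ^ m * (EM G φ χ * Amat G ^ p))ᵀ)).trace from rfl]
  rw [Matrix.transpose_mul, Matrix.transpose_mul, Apow_transpose, Apow_transpose, EM_transpose]
  rw [mul_assoc, Matrix.trace_mul_comm]
  congr 1
  rw [show 2*p = p + p by ring, show 2*m = m + m by ring, pow_add, pow_add]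
  simp only [mul_assoc]

lemma cs_e3 (p m : ℕ) :
    ∑ z ∈ colset φ ×ˢ ((Finset.univ : Finset V) ×ˢ Finset.univ),
      ((EM G φ z.1 * Amat G ^ (p + m)) z.2.2 z.2.1) ^ 2
      = Fform G φ 0 (2*p + 2*m) := by
  rw [Finset.sum_product]
  refine Finset.sum_congr rfl fun χ _ => ?_
  rw [Finset.sum_product]
  dsimp only
  simp_rw [pow_two]
  have hrw : ∀ (x c : V), (EM G φ χ * Amat G ^ (p + m)) c x *
      (EM G φ χ * Amat G ^ (p + m)) c x
      = ((EM G φ χ * Amat G ^ (p + m))ᵀ) x c * (EM G φ χ * Amat G ^ (p + m)) c x :=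
    fun _ _ => rfl
  simp_rw [hrw, ← Matrix.mul_apply]
  rw [show (∑ x : V, (((EM G φ χ * Amat G ^ (p + m))ᵀ) * (EM G φ χ * Amat G ^ (p + m))) x x)
      = (((EM G φ χ * Amat G ^ (p + m))ᵀ) * (EM G φ χ * Amat G ^ (p + m))).trace from rfl]
  rw [Matrix.transpose_mul, Apow_transpose, EM_transpose]
  rw [mul_assoc, Matrix.trace_mul_comm]
  congr 1
  rw [pow_zero, one_mul]
  simp only [mul_assoc]
  rw [← pow_add, show p + m + (p + m) = 2*p + 2*m by ring]

lemma key_ineq (p m : ℕ) :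
    Fform G φ p (p + 2*m) ^ 2 ≤ Fform G φ 0 (2*p + 2*m) * Fform G φ (2*p) (2*m) := by
  have hcs := Finset.sum_mul_sq_le_sq_mul_sq
    (colset φ ×ˢ ((Finset.univ : Finset V) ×ˢ Finset.univ))
    (fun z : C × V × V => (Amat G ^ m * (EM G φ z.1 * Amat G ^ p)) z.2.1 z.2.2)
    (fun z : C × V × V => (EM G φ z.1 * Amat G ^ (p + m)) z.2.2 z.2.1)
  rw [cs_e1, cs_e2, cs_e3] at hcs
  calc Fform G φ p (p + 2*m) ^ 2 ≤ Fform G φ (2*p) (2*m) * Fform G φ 0 (2*p + 2*m) := hcs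
    _ = Fform G φ 0 (2*p + 2*m) * Fform G φ (2*p) (2*m) := mul_comm _ _
end Forms

/-- Let `k ≥ 2`, let `G` be a graph with a proper edge coloring `φ`, and for
`1 ≤ t ≤ 2k−1` let `F_t` denote the set of closed `2k`-walks in `G` that are color-degenerate
at `(0, t)`. Then for every `1 ≤ t ≤ 2k−1`, `|F_t|² ≤ |F₁| · |F_{2t−1}|`, where the index
`2t−1` is taken modulo `2k` (so `F_{2t−1}` means `F_{2t−2k+1}` when `2t−1 > 2k−1`). -/
theorem colorDeg_sq_le {V C : Type*} [Fintype V] (k : ℕ) (hk : 2 ≤ k)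
    (G : SimpleGraph V) (φ : Sym2 V → C)
    (hφ : ∀ ⦃a b c : V⦄, G.Adj a b → G.Adj a c → b ≠ c → φ s(a, b) ≠ φ s(a, c))
    (t : ℕ) (ht1 : 1 ≤ t) (ht2 : t ≤ 2 * k - 1) :
    Nat.card (ColorDegWalk G φ k t) ^ 2 ≤
      Nat.card (ColorDegWalk G φ k 1) *
        Nat.card (ColorDegWalk G φ k (if 2 * t - 1 ≤ 2 * k - 1 then 2 * t - 1
          else 2 * t + 1 - 2 * k)) := by
  by_cases hc : t ≤ k
  · obtain ⟨p, m, hp, hm⟩ : ∃ p m, t = p + 1 ∧ k = p + 1 + m := ⟨t - 1, k - t, by omega, by omega⟩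
    have hif : (if 2 * t - 1 ≤ 2 * k - 1 then 2 * t - 1 else 2 * t + 1 - 2 * k) = 2 * p + 1 := by
      rw [if_pos (by omega)]; omega
    rw [hif]
    have h1 : (Nat.card (ColorDegWalk G φ k t) : ℝ) = Fform G φ p (p + 2 * m) := by
      rw [show t = p + 1 from hp]
      exact cdw_form G φ (by omega)
    have h2 : (Nat.card (ColorDegWalk G φ k 1) : ℝ) = Fform G φ 0 (2 * p + 2 * m) := by
      have := cdw_form G φ (k := k) (p := 0) (q := 2 * p + 2 * m) (by omega)
      exact this
    have h3 : (Nat.card (ColorDegWalk G φ k (2 * p + 1)) : ℝ) = Fform G φ (2 * p) (2 * m) := by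
      exact cdw_form G φ (by omega)
    have key := key_ineq G φ p m
    rw [← h1, ← h2, ← h3] at key
    exact_mod_cast key
  · obtain ⟨p, m, hp, hm⟩ : ∃ p m, t = p + 2 * m + 1 ∧ k = p + 1 + m :=
      ⟨2 * k - t - 1, t - k, by omega, by omega⟩
    have hif : (if 2 * t - 1 ≤ 2 * k - 1 then 2 * t - 1 else 2 * t + 1 - 2 * k)
        = 2 * m + 1 := by
      rw [if_neg (by omega)]; omega
    rw [hif]
    have h1 : (Nat.card (ColorDegWalk G φ k t) : ℝ) = Fform G φ p (p + 2 * m) := by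
      rw [show t = (p + 2 * m) + 1 from hp, cdw_form G φ (k := k) (p := p + 2 * m) (q := p) (by omega), Fform_comm]
    have h2 : (Nat.card (ColorDegWalk G φ k 1) : ℝ) = Fform G φ 0 (2 * p + 2 * m) := by
      have := cdw_form G φ (k := k) (p := 0) (q := 2 * p + 2 * m) (by omega)
      exact this
    have h3 : (Nat.card (ColorDegWalk G φ k (2 * m + 1)) : ℝ) = Fform G φ (2 * p) (2 * m) := by
      rw [cdw_form G φ (k := k) (p := 2 * m) (q := 2 * p) (by omega), Fform_comm]
    have key := key_ineq G φ p m
    rw [← h1, ← h2, ← h3] at key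
    exact_mod_cast key
end

section
/- Let k ≥ 2 and let G be a graph with a proper edge coloring φ. For 1 ≤ s ≤ 2k−3 let U_s be the set of closed 2k-walks vertex-degenerate at (0, s+1), and for 1 ≤ t ≤ 2k−1 let F_t be the set of closed 2k-walks color-degenerate at (0, t). Then |U_s| ≤ |U₁| for every 1 ≤ s ≤ 2k−3, and |F_t| ≤ |F₁| for every 1 ≤ t ≤ 2k−1. -/
open Matrix Finset

section RealIneq

lemma key1 (x y : ℝ) {a b : ℕ} (h : a % 2 = b % 2) : 0 ≤ (x ^ a - y ^ a) * (x ^ b - y ^ b) := by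
  rcases Nat.even_or_odd a with ha | ha
  · have hb : Even b := by rw [Nat.even_iff] at *; omega
    rw [← ha.pow_abs x, ← ha.pow_abs y, ← hb.pow_abs x, ← hb.pow_abs y]
    rcases le_total |x| |y| with hxy | hxy
    · have h1 : |x| ^ a ≤ |y| ^ a := pow_le_pow_left₀ (abs_nonneg x) hxy a
      have h2 : |x| ^ b ≤ |y| ^ b := pow_le_pow_left₀ (abs_nonneg x) hxy b
      nlinarith
    · have h1 : |y| ^ a ≤ |x| ^ a := pow_le_pow_left₀ (abs_nonneg y) hxy a
      have h2 : |y| ^ b ≤ |x| ^ b := pow_le_pow_left₀ (abs_nonneg y) hxy b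
      nlinarith
  · have hb : Odd b := by rw [Nat.odd_iff] at *; omega
    rcases le_total x y with hxy | hxy
    · have h1 : x ^ a ≤ y ^ a := (Odd.strictMono_pow (R := ℝ) ha).monotone hxy
      have h2 : x ^ b ≤ y ^ b := (Odd.strictMono_pow (R := ℝ) hb).monotone hxy
      nlinarith
    · have h1 : y ^ a ≤ x ^ a := (Odd.strictMono_pow (R := ℝ) ha).monotone hxy
      have h2 : y ^ b ≤ x ^ b := (Odd.strictMono_pow (R := ℝ) hb).monotone hxy
      nlinarith

lemma key2 (x y : ℝ) (c d m : ℕ) (h : c % 2 = d % 2) (hm : Even m) :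
    x ^ (c + m) * y ^ (d + m) + x ^ (d + m) * y ^ (c + m) ≤
      x ^ m * y ^ (c + d + m) + x ^ (c + d + m) * y ^ m := by
  have h1 := key1 x y h
  have h2 : 0 ≤ x ^ m * y ^ m := mul_nonneg (hm.pow_nonneg x) (hm.pow_nonneg y)
  have h3 := mul_nonneg h2 h1
  have e : x ^ m * y ^ m * ((x ^ c - y ^ c) * (x ^ d - y ^ d)) =
      x ^ m * y ^ (c + d + m) + x ^ (c + d + m) * y ^ m
        - (x ^ (c + m) * y ^ (d + m) + x ^ (d + m) * y ^ (c + m)) := by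
    ring
  linarith [e ▸ h3]

end RealIneq

section Spectral

variable {ι : Type*} [Fintype ι] [DecidableEq ι]

lemma trace_ineq (A B : Matrix ι ι ℝ) (hA : A.IsHermitian) (hB : B.IsHermitian)
    (c d m : ℕ) (h : c % 2 = d % 2) (hm : Even m) :
    (B * A ^ (c + m) * B * A ^ (d + m)).trace ≤ (B * A ^ m * B * A ^ (c + d + m)).trace := by
  set U : Matrix ι ι ℝ := (hA.eigenvectorUnitary : Matrix ι ι ℝ) with hUdef
  have hU : U * star U = 1 := (Matrix.mem_unitaryGroup_iff).mp hA.eigenvectorUnitary.2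
  have hU' : star U * U = 1 := (Matrix.mem_unitaryGroup_iff').mp hA.eigenvectorUnitary.2
  set lam : ι → ℝ := hA.eigenvalues with hlam
  have hspec : A = U * diagonal lam * star U := by
    have := hA.spectral_theorem
    simpa using this
  have hpow : ∀ e : ℕ, A ^ e = U * diagonal (fun i => lam i ^ e) * star U := by
    intro e
    induction e with
    | zero => simp [pow_zero, hU, Matrix.diagonal_one]
    | succ e ih =>
        rw [pow_succ, ih, hspec]
        calc U * diagonal (fun i => lam i ^ e) * star U * (U * diagonal lam * star U)
            = U * (diagonal (fun i => lam i ^ e) * (star U * U) * diagonal lam) * star U := by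
              noncomm_ring
          _ = U * diagonal (fun i => lam i ^ (e + 1)) * star U := by
              rw [hU', mul_one, diagonal_mul_diagonal]
              simp [pow_succ]
  set C : Matrix ι ι ℝ := star U * B * U with hCdef
  have hBC : B = U * C * star U := by
    rw [hCdef]
    calc B = (U * star U) * B * (U * star U) := by rw [hU]; noncomm_ring
      _ = U * (star U * B * U) * star U := by noncomm_ring
  have hC : C.IsHermitian := by
    have : Cᴴ = C := by
      rw [hCdef, Matrix.star_eq_conjTranspose]
      simp only [Matrix.conjTranspose_mul, Matrix.conjTranspose_conjTranspose, hB.eq]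
      noncomm_ring
    exact this
  have hCsymm : ∀ i j, C j i = C i j := by
    intro i j
    have := congrFun (congrFun hC j) i
    simpa [Matrix.conjTranspose_apply] using this.symm
  -- trace formula
  have htr : ∀ p q : ℕ, (B * A ^ p * B * A ^ q).trace =
      ∑ i, ∑ j, C i j * C j i * (lam j ^ p * lam i ^ q) := by
    intro p q
    have expand : B * A ^ p * B * A ^ q =
        U * (C * diagonal (fun i => lam i ^ p) * C * diagonal (fun i => lam i ^ q)) * star U := by
      calc B * A ^ p * B * A ^ q
          = (U * C * star U) * (U * diagonal (fun i => lam i ^ p) * star U) *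
            (U * C * star U) * (U * diagonal (fun i => lam i ^ q) * star U) := by
            rw [← hBC, ← hpow p, ← hpow q]
        _ = U * (C * ((star U * U) * diagonal (fun i => lam i ^ p)) *
              ((star U * U) * C) * ((star U * U) * diagonal (fun i => lam i ^ q))) * star U := by
            noncomm_ring
        _ = _ := by rw [hU']; noncomm_ring
    rw [expand, Matrix.trace_mul_cycle, ← mul_assoc, hU', one_mul]
    have step1 : ∀ (M : Matrix ι ι ℝ) (g : ι → ℝ), (M * diagonal g).trace = ∑ i, M i i * g i := by
      intro M g; simp [Matrix.trace, Matrix.mul_diagonal]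
    rw [step1]
    refine Finset.sum_congr rfl fun i _ => ?_
    have step2 : ((C * diagonal fun z => lam z ^ p) * C) i i = ∑ j, (C i j * lam j ^ p) * C j i := by
      rw [Matrix.mul_apply]
      refine Finset.sum_congr rfl fun j _ => ?_
      rw [Matrix.mul_diagonal]
    rw [step2, Finset.sum_mul]
    refine Finset.sum_congr rfl fun j _ => ?_
    ring
  rw [htr, htr]
  -- symmetrization
  have hsum : ∀ p q : ℕ, ∑ i, ∑ j, C i j * C j i * (lam j ^ p * lam i ^ q) =
      ∑ i, ∑ j, C i j * C j i * (lam j ^ q * lam i ^ p) := by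
    intro p q
    rw [Finset.sum_comm]
    apply Finset.sum_congr rfl; intro i _
    apply Finset.sum_congr rfl; intro j _
    rw [hCsymm i j]
    ring
  have main : (∑ i, ∑ j, C i j * C j i * (lam j ^ (c + m) * lam i ^ (d + m))) +
      (∑ i, ∑ j, C i j * C j i * (lam j ^ (d + m) * lam i ^ (c + m))) ≤
      (∑ i, ∑ j, C i j * C j i * (lam j ^ m * lam i ^ (c + d + m))) +
      (∑ i, ∑ j, C i j * C j i * (lam j ^ (c + d + m) * lam i ^ m)) := by
    rw [← Finset.sum_add_distrib, ← Finset.sum_add_distrib]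
    apply Finset.sum_le_sum; intro i _
    rw [← Finset.sum_add_distrib, ← Finset.sum_add_distrib]
    apply Finset.sum_le_sum; intro j _
    have hw : (0:ℝ) ≤ C i j * C j i := by rw [hCsymm i j]; exact mul_self_nonneg _
    have hk := key2 (lam i) (lam j) c d m h hm
    nlinarith [mul_le_mul_of_nonneg_left hk hw]
  have e1 := hsum (c + m) (d + m)
  have e2 := hsum m (c + d + m)
  linarith [main, e1, e2]

end Spectral

section Comb

variable {V : Type*} (G : SimpleGraph V)

abbrev Wk (m : ℕ) (x y : V) : Type _ :=
  {f : Fin (m + 1) → V // f 0 = x ∧ f (Fin.last m) = y ∧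
    ∀ i : Fin m, G.Adj (f i.castSucc) (f i.succ)}

abbrev Marked (n r : ℕ) (R : V → V → V → V → Prop) : Type _ :=
  {v : ZMod n → V // (∀ i, G.Adj (v i) (v (i + 1))) ∧
    R (v 0) (v ((1 : ℕ) : ZMod n)) (v ((r : ℕ) : ZMod n)) (v ((r + 1 : ℕ) : ZMod n))}

lemma mycard_sigma {ι : Type*} [Fintype ι] (β : ι → Type*) [∀ i, Finite (β i)] :
    Nat.card ((i : ι) × β i) = ∑ i, Nat.card (β i) := by
  letI := fun i => Fintype.ofFinite (β i)
  simp [Nat.card_eq_fintype_card]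

lemma ncard_plift (p : Prop) [Decidable p] : Nat.card (PLift p) = if p then 1 else 0 := by
  split
  · rename_i h
    exact Nat.card_eq_one_iff_unique.mpr ⟨⟨fun a b => by cases a; cases b; rfl⟩, ⟨⟨h⟩⟩⟩
  · rename_i h
    haveI : IsEmpty (PLift p) := ⟨fun a => h a.down⟩
    exact Nat.card_of_isEmpty

variable {p q : ℕ}

/-- gluing function on naturals -/
def glueN (x : V) (P : Fin (p + 1) → V) (Q : Fin (q + 1) → V) : ℕ → V := fun u =>
  if u = 0 then x
  else if h : u ≤ p + 1 then P ⟨u - 1, by omega⟩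
  else Q ⟨min (u - (p + 2)) q, by omega⟩

/-- gluing function on `ZMod (p+q+2)` -/
def glueF (x : V) (P : Fin (p + 1) → V) (Q : Fin (q + 1) → V) : ZMod (p + q + 2) → V :=
  fun i => glueN x P Q i.val

variable {x y z w : V} {P : Fin (p + 1) → V} {Q : Fin (q + 1) → V}

lemma glueN_zero : glueN x P Q 0 = x := by simp [glueN]

lemma glueN_P (u : ℕ) (h1 : 1 ≤ u) (h2 : u ≤ p + 1) :
    glueN x P Q u = P ⟨u - 1, by omega⟩ := by
  rw [glueN, if_neg (by omega), dif_pos h2]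

lemma glueN_Q (u : ℕ) (h1 : p + 2 ≤ u) (h2 : u - (p + 2) ≤ q) :
    glueN x P Q u = Q ⟨u - (p + 2), by omega⟩ := by
  rw [glueN, if_neg (by omega), dif_neg (by omega)]
  congr 1
  apply Fin.ext
  simp [min_eq_left h2]

lemma glueF_natCast (u : ℕ) (hu : u < p + q + 2) :
    glueF x P Q ((u : ℕ) : ZMod (p + q + 2)) = glueN x P Q u := by
  haveI : NeZero (p + q + 2) := ⟨by omega⟩
  rw [glueF, ZMod.val_cast_of_lt hu]

lemma glueF_zero : glueF x P Q (0 : ZMod (p + q + 2)) = x := by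
  haveI : NeZero (p + q + 2) := ⟨by omega⟩
  rw [glueF, ZMod.val_zero, glueN_zero]

lemma fapp {α : Type*} {N : ℕ} (f : Fin N → α) (a b : ℕ) (ha : a < N) (hb : b < N)
    (e : a = b) : f ⟨a, ha⟩ = f ⟨b, hb⟩ := by subst e; rfl

lemma fzero {α : Type*} {N : ℕ} (f : Fin (N + 1) → α) (h : 0 < N + 1) :
    f ⟨0, h⟩ = f 0 := congrArg f (by apply Fin.ext; simp)

lemma flast {α : Type*} {N : ℕ} (f : Fin (N + 1) → α) (h : N < N + 1) :
    f ⟨N, h⟩ = f (Fin.last N) := congrArg f (by apply Fin.ext; simp)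

lemma glueF_adj
    (hP0 : P 0 = y) (hPl : P (Fin.last p) = z)
    (hPadj : ∀ i : Fin p, G.Adj (P i.castSucc) (P i.succ))
    (hQ0 : Q 0 = w) (hQl : Q (Fin.last q) = x)
    (hQadj : ∀ i : Fin q, G.Adj (Q i.castSucc) (Q i.succ))
    (hxy : G.Adj x y) (hzw : G.Adj z w) :
    ∀ i : ZMod (p + q + 2), G.Adj (glueF x P Q i) (glueF x P Q (i + 1)) := by
  haveI : NeZero (p + q + 2) := ⟨by omega⟩
  have hadjP : ∀ (a : ℕ) (h : a < p), G.Adj (P ⟨a, by omega⟩) (P ⟨a + 1, by omega⟩) := by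
    intro a h
    have h0 := hPadj ⟨a, h⟩
    rwa [Fin.castSucc_mk, Fin.succ_mk] at h0
  have hadjQ : ∀ (a : ℕ) (h : a < q), G.Adj (Q ⟨a, by omega⟩) (Q ⟨a + 1, by omega⟩) := by
    intro a h
    have h0 := hQadj ⟨a, h⟩
    rwa [Fin.castSucc_mk, Fin.succ_mk] at h0
  have hwx : q = 0 → w = x := by
    intro hq
    subst hq
    rw [← hQ0, ← hQl]
    exact congrArg Q (by apply Fin.ext; simp)
  intro i
  have hval : i.val < p + q + 2 := ZMod.val_lt i
  have hi : ((i.val : ℕ) : ZMod (p + q + 2)) = i := ZMod.natCast_rightInverse i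
  have hfi : glueF x P Q i = glueN x P Q i.val := rfl
  by_cases hwrap : i.val + 1 = p + q + 2
  · -- wrap-around step
    have hA : i + 1 = (0 : ZMod (p + q + 2)) := by
      rw [← hi, ← Nat.cast_one, ← Nat.cast_add, hwrap, ZMod.natCast_self]
    rw [hA, glueF_zero, hfi]
    by_cases hq : q = 0
    · -- i.val = p+1, last vertex of P
      have hv : i.val = p + 1 := by omega
      rw [hv, glueN_P (p + 1) (by omega) (by omega),
        fapp P (p + 1 - 1) p (by omega) (by omega) (by omega), flast P, hPl]
      rw [← hwx hq]
      exact hzw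
    · rw [glueN_Q i.val (by omega) (by omega),
        fapp Q (i.val - (p + 2)) (q - 1) (by omega) (by omega) (by omega)]
      have h0 := hadjQ (q - 1) (by omega)
      rw [fapp Q (q - 1 + 1) q (by omega) (by omega) (by omega), flast Q, hQl] at h0
      exact h0
  · have hlt : i.val + 1 < p + q + 2 := by omega
    have hB : glueF x P Q (i + 1) = glueN x P Q (i.val + 1) := by
      conv_lhs => rw [← hi, ← Nat.cast_one, ← Nat.cast_add]
      exact glueF_natCast _ hlt
    rw [hB, hfi]
    rcases Nat.lt_or_ge i.val 1 with h1 | h1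
    · -- i.val = 0
      have hv : i.val = 0 := by omega
      rw [hv, glueN_zero, glueN_P 1 (by omega) (by omega),
        fapp P (1 - 1) 0 (by omega) (by omega) (by omega), fzero P, hP0]
      exact hxy
    rcases Nat.lt_or_ge i.val (p + 1) with h2 | h2
    · -- 1 ≤ i.val ≤ p
      rw [glueN_P i.val (by omega) (by omega), glueN_P (i.val + 1) (by omega) (by omega),
        fapp P (i.val + 1 - 1) (i.val - 1 + 1) (by omega) (by omega) (by omega)]
      exact hadjP (i.val - 1) (by omega)
    rcases Nat.lt_or_ge i.val (p + 2) with h3 | h3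
    · -- i.val = p + 1, and q ≥ 1 since no wrap
      have hv : i.val = p + 1 := by omega
      rw [hv, glueN_P (p + 1) (by omega) (by omega), glueN_Q (p + 2) (by omega) (by omega),
        fapp P (p + 1 - 1) p (by omega) (by omega) (by omega), flast P, hPl,
        fapp Q (p + 2 - (p + 2)) 0 (by omega) (by omega) (by omega), fzero Q, hQ0]
      exact hzw
    · -- p + 2 ≤ i.val ≤ p + q (interior of Q)
      rw [glueN_Q i.val (by omega) (by omega), glueN_Q (i.val + 1) (by omega) (by omega),
        fapp Q (i.val + 1 - (p + 2)) (i.val - (p + 2) + 1) (by omega) (by omega) (by omega)]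
      exact hadjQ (i.val - (p + 2)) (by omega)

lemma glueF_one (hP0 : P 0 = y) :
    glueF x P Q ((1 : ℕ) : ZMod (p + q + 2)) = y := by
  rw [glueF_natCast 1 (by omega), glueN_P 1 (by omega) (by omega),
    fapp P (1 - 1) 0 (by omega) (by omega) (by omega), fzero P, hP0]

lemma glueF_r (hPl : P (Fin.last p) = z) :
    glueF x P Q ((p + 1 : ℕ) : ZMod (p + q + 2)) = z := by
  rw [glueF_natCast (p + 1) (by omega), glueN_P (p + 1) (by omega) (by omega),
    fapp P (p + 1 - 1) p (by omega) (by omega) (by omega), flast P, hPl]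

lemma glueF_r1 (hQ0 : Q 0 = w) (hQl : Q (Fin.last q) = x) :
    glueF x P Q ((p + 1 + 1 : ℕ) : ZMod (p + q + 2)) = w := by
  haveI : NeZero (p + q + 2) := ⟨by omega⟩
  by_cases hq : q = 0
  · have e : ((p + 1 + 1 : ℕ) : ZMod (p + q + 2)) = 0 := by
      rw [show p + 1 + 1 = p + q + 2 by omega]
      exact ZMod.natCast_self _
    rw [e, glueF_zero, ← hQ0, ← hQl]
    subst hq
    exact congrArg Q (by apply Fin.ext; simp)
  · rw [glueF_natCast (p + 1 + 1) (by omega), glueN_Q (p + 1 + 1) (by omega) (by omega),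
      fapp Q (p + 1 + 1 - (p + 2)) 0 (by omega) (by omega) (by omega), fzero Q, hQ0]

/-- The fiber of a marked closed walk over its four exposed vertices. -/
def markedFiberEquiv (R : V → V → V → V → Prop) (e : (V × V) × V × V) :
    {w : Marked G (p + q + 2) (p + 1) R //
      ((w.1 0, w.1 ((1 : ℕ) : ZMod (p + q + 2))),
        (w.1 ((p + 1 : ℕ) : ZMod (p + q + 2)), w.1 ((p + 1 + 1 : ℕ) : ZMod (p + q + 2)))) = e} ≃
    PLift (G.Adj e.1.1 e.1.2 ∧ G.Adj e.2.1 e.2.2 ∧ R e.1.1 e.1.2 e.2.1 e.2.2) ×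
      (Wk G p e.1.2 e.2.1 × Wk G q e.2.2 e.1.1) := by
  haveI : NeZero (p + q + 2) := ⟨by omega⟩
  have hcast1 : ∀ u : ℕ, ((u : ℕ) : ZMod (p + q + 2)) + 1 = ((u + 1 : ℕ) : ZMod (p + q + 2)) := by
    intro u; push_cast; ring
  refine
  { toFun := fun w =>
      ⟨⟨?_⟩, ⟨fun i2 => w.1.1 ((1 + i2.val : ℕ) : ZMod (p + q + 2)), ?_, ?_, ?_⟩,
        ⟨fun j => w.1.1 ((p + 1 + 1 + j.val : ℕ) : ZMod (p + q + 2)), ?_, ?_, ?_⟩⟩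
    invFun := fun pr =>
      ⟨⟨glueF e.1.1 pr.2.1.1 pr.2.2.1, ?_, ?_⟩, ?_⟩
    left_inv := ?_
    right_inv := ?_ }
  case refine_1 =>
    obtain ⟨⟨v, hadj, hR⟩, hfib⟩ := w
    obtain ⟨⟨e11, e12⟩, e21, e22⟩ := e
    simp only [Prod.mk.injEq] at hfib
    obtain ⟨⟨hx, hy⟩, hz, hw⟩ := hfib
    subst hx; subst hy; subst hz; subst hw
    refine ⟨?_, ?_, hR⟩
    · have h0 := hadj 0
      rwa [show (0 : ZMod (p + q + 2)) + 1 = ((1 : ℕ) : ZMod (p + q + 2)) by push_cast; ring]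
        at h0
    · have h0 := hadj ((p + 1 : ℕ) : ZMod (p + q + 2))
      rwa [hcast1 (p + 1)] at h0
  case refine_2 =>
    show w.1.1 ((1 + (0 : Fin (p + 1)).val : ℕ) : ZMod (p + q + 2)) = e.1.2
    rw [show (1 + (0 : Fin (p + 1)).val) = 1 by simp]
    exact congrArg (fun t => t.1.2) w.2
  case refine_3 =>
    show w.1.1 ((1 + (Fin.last p).val : ℕ) : ZMod (p + q + 2)) = e.2.1
    rw [show (1 + (Fin.last p).val) = p + 1 by simp [Fin.val_last]; omega]
    exact congrArg (fun t => t.2.1) w.2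
  case refine_4 =>
    intro i2
    have h0 := w.1.2.1 ((1 + i2.val : ℕ) : ZMod (p + q + 2))
    rw [hcast1 (1 + i2.val)] at h0
    show G.Adj (w.1.1 ((1 + (i2.castSucc).val : ℕ) : ZMod (p + q + 2)))
      (w.1.1 ((1 + (i2.succ).val : ℕ) : ZMod (p + q + 2)))
    rw [show ((i2.castSucc).val) = i2.val from rfl, show ((i2.succ).val) = i2.val + 1 from rfl,
      show 1 + (i2.val + 1) = 1 + i2.val + 1 by omega]
    exact h0
  case refine_5 =>
    show w.1.1 ((p + 1 + 1 + (0 : Fin (q + 1)).val : ℕ) : ZMod (p + q + 2)) = e.2.2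
    rw [show (p + 1 + 1 + (0 : Fin (q + 1)).val) = p + 1 + 1 by simp]
    exact congrArg (fun t => t.2.2) w.2
  case refine_6 =>
    show w.1.1 ((p + 1 + 1 + (Fin.last q).val : ℕ) : ZMod (p + q + 2)) = e.1.1
    rw [show (p + 1 + 1 + (Fin.last q).val) = p + q + 2 by simp [Fin.val_last]; omega,
      ZMod.natCast_self]
    exact congrArg (fun t => t.1.1) w.2
  case refine_7 =>
    intro j
    have h0 := w.1.2.1 ((p + 1 + 1 + j.val : ℕ) : ZMod (p + q + 2))
    rw [hcast1 (p + 1 + 1 + j.val)] at h0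
    show G.Adj (w.1.1 ((p + 1 + 1 + (j.castSucc).val : ℕ) : ZMod (p + q + 2)))
      (w.1.1 ((p + 1 + 1 + (j.succ).val : ℕ) : ZMod (p + q + 2)))
    rw [show ((j.castSucc).val) = j.val from rfl, show ((j.succ).val) = j.val + 1 from rfl,
      show p + 1 + 1 + (j.val + 1) = p + 1 + 1 + j.val + 1 by omega]
    exact h0
  case refine_8 =>
    exact glueF_adj G pr.2.1.2.1 pr.2.1.2.2.1 pr.2.1.2.2.2 pr.2.2.2.1 pr.2.2.2.2.1
      pr.2.2.2.2.2 pr.1.down.1 pr.1.down.2.1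
  case refine_9 =>
    rw [glueF_zero, glueF_one pr.2.1.2.1, glueF_r pr.2.1.2.2.1,
      glueF_r1 pr.2.2.2.1 pr.2.2.2.2.1]
    exact pr.1.down.2.2
  case refine_10 =>
    show ((glueF e.1.1 pr.2.1.1 pr.2.2.1 0,
        glueF e.1.1 pr.2.1.1 pr.2.2.1 ((1 : ℕ) : ZMod (p + q + 2))),
      (glueF e.1.1 pr.2.1.1 pr.2.2.1 ((p + 1 : ℕ) : ZMod (p + q + 2)),
        glueF e.1.1 pr.2.1.1 pr.2.2.1 ((p + 1 + 1 : ℕ) : ZMod (p + q + 2)))) = e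
    rw [glueF_zero, glueF_one pr.2.1.2.1, glueF_r pr.2.1.2.2.1,
      glueF_r1 pr.2.2.2.1 pr.2.2.2.2.1]
  case refine_11 =>
    rintro ⟨⟨v, hadj, hR⟩, hfib⟩
    apply Subtype.ext
    apply Subtype.ext
    funext i
    have hi : ((i.val : ℕ) : ZMod (p + q + 2)) = i := ZMod.natCast_rightInverse i
    have hval : i.val < p + q + 2 := ZMod.val_lt i
    show glueF e.1.1 _ _ i = v i
    conv_rhs => rw [← hi]
    have hfi : glueF e.1.1 (fun i2 : Fin (p + 1) => v ((1 + i2.val : ℕ) : ZMod (p + q + 2)))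
        (fun j : Fin (q + 1) => v ((p + 1 + 1 + j.val : ℕ) : ZMod (p + q + 2))) i
        = glueN e.1.1 _ _ i.val := rfl
    rw [hfi]
    rcases Nat.lt_or_ge i.val 1 with h1 | h1
    · rw [show i.val = 0 by omega, glueN_zero]
      rw [show ((0 : ℕ) : ZMod (p + q + 2)) = 0 from Nat.cast_zero]
      obtain ⟨⟨e11, e12⟩, e21, e22⟩ := e
      simp only [Prod.mk.injEq] at hfib
      exact hfib.1.1.symm
    rcases Nat.lt_or_ge i.val (p + 2) with h2 | h2
    · rw [glueN_P i.val (by omega) (by omega)]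
      exact congrArg v (congrArg Nat.cast (show 1 + (i.val - 1) = i.val by omega))
    · rw [glueN_Q i.val (by omega) (by omega)]
      exact congrArg v
        (congrArg Nat.cast (show p + 1 + 1 + (i.val - (p + 2)) = i.val by omega))
  case refine_12 =>
    intro pr
    obtain ⟨h, P, Q⟩ := pr
    refine Prod.ext (Subsingleton.elim _ _) (Prod.ext ?_ ?_)
    · apply Subtype.ext
      funext i2
      show glueF e.1.1 P.1 Q.1 ((1 + i2.val : ℕ) : ZMod (p + q + 2)) = P.1 i2
      rw [glueF_natCast (1 + i2.val) (by have := i2.isLt; omega),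
        glueN_P (1 + i2.val) (by omega) (by have := i2.isLt; omega),
        fapp P.1 (1 + i2.val - 1) i2.val (by omega) (by have := i2.isLt; omega) (by omega)]
    · apply Subtype.ext
      funext j
      show glueF e.1.1 P.1 Q.1 ((p + 1 + 1 + j.val : ℕ) : ZMod (p + q + 2)) = Q.1 j
      rcases Nat.lt_or_ge j.val q with hj | hj
      · rw [glueF_natCast (p + 1 + 1 + j.val) (by omega),
          glueN_Q (p + 1 + 1 + j.val) (by omega) (by omega),
          fapp Q.1 (p + 1 + 1 + j.val - (p + 2)) j.val (by omega) (by have := j.isLt; omega)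
            (by omega)]
      · have hjq : j.val = q := by have := j.isLt; omega
        rw [show ((p + 1 + 1 + j.val : ℕ) : ZMod (p + q + 2))
            = ((p + 1 + 1 + q : ℕ) : ZMod (p + q + 2)) from congrArg Nat.cast (by omega),
          show ((p + 1 + 1 + q : ℕ) : ZMod (p + q + 2)) = 0 from by
            rw [show p + 1 + 1 + q = p + q + 2 by omega]; exact ZMod.natCast_self _,
          glueF_zero]
        rw [show j = Fin.last q from by apply Fin.ext; simp [Fin.val_last, hjq], Q.2.2.1]

/-- zero-length walks. -/
def wkZeroEquiv (x y : V) : Wk G 0 x y ≃ PLift (x = y) where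
  toFun f := ⟨by
    have e0 : (0 : Fin (0 + 1)) = Fin.last 0 := by apply Fin.ext; simp
    exact f.2.1.symm.trans ((congrArg f.1 e0).trans f.2.2.1)⟩
  invFun h := ⟨fun _ => x, rfl, h.down, fun i => i.elim0⟩
  left_inv f := Subtype.ext (funext fun z => by
    have hz : (0 : Fin (0 + 1)) = z := by
      apply Fin.ext
      have := z.isLt
      omega
    exact f.2.1.symm.trans (congrArg f.1 hz))
  right_inv h := Subsingleton.elim _ _

/-- peeling the first step off a walk: the fiber over the second vertex. -/
def wkSuccFiberEquiv (m : ℕ) (x y z : V) :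
    {w : Wk G (m + 1) x y // w.1 1 = z} ≃ PLift (G.Adj x z) × Wk G m z y where
  toFun w :=
    ⟨⟨by
      have h0 := w.1.2.2.2 0
      rw [Fin.castSucc_zero, Fin.succ_zero_eq_one] at h0
      rw [w.1.2.1, w.2] at h0
      exact h0⟩,
     ⟨fun i => w.1.1 i.succ,
      by
        show w.1.1 (Fin.succ 0) = z
        rw [Fin.succ_zero_eq_one]
        exact w.2,
      by
        show w.1.1 (Fin.last m).succ = y
        rw [Fin.succ_last]
        exact w.1.2.2.1,
      fun i => by
        have h0 := w.1.2.2.2 i.succ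
        rwa [← Fin.succ_castSucc] at h0⟩⟩
  invFun pr :=
    ⟨⟨Fin.cases x pr.2.1,
      by simp,
      by
        show Fin.cases x pr.2.1 (Fin.last (m + 1)) = y
        rw [← Fin.succ_last m, Fin.cases_succ]
        exact pr.2.2.2.1,
      fun i => by
        cases i using Fin.cases with
        | zero =>
            show G.Adj (Fin.cases x pr.2.1 (Fin.castSucc 0)) (Fin.cases x pr.2.1 (Fin.succ 0))
            rw [Fin.castSucc_zero, Fin.cases_zero, Fin.cases_succ, pr.2.2.1]
            exact pr.1.down
        | succ j =>
            show G.Adj (Fin.cases x pr.2.1 j.succ.castSucc) (Fin.cases x pr.2.1 j.succ.succ)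
            rw [← Fin.succ_castSucc, Fin.cases_succ, Fin.cases_succ]
            exact pr.2.2.2.2 j⟩,
     by
      have h1 : (1 : Fin (m + 1 + 1)) = Fin.succ 0 := by apply Fin.ext; simp
      show Fin.cases x pr.2.1 1 = z
      rw [h1, Fin.cases_succ]
      exact pr.2.2.1⟩
  left_inv w := by
    apply Subtype.ext
    apply Subtype.ext
    funext i
    cases i using Fin.cases with
    | zero =>
        show Fin.cases x (fun i => w.1.1 i.succ) 0 = w.1.1 0
        rw [Fin.cases_zero, w.1.2.1]
    | succ j =>
        show Fin.cases x (fun i => w.1.1 i.succ) j.succ = w.1.1 j.succ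
        rw [Fin.cases_succ]
  right_inv pr := by
    refine Prod.ext (Subsingleton.elim _ _) (Subtype.ext (funext fun i => ?_))
    show Fin.cases x pr.2.1 i.succ = pr.2.1 i
    rw [Fin.cases_succ]

lemma card_wk [Fintype V] [DecidableEq V] [DecidableRel G.Adj] (m : ℕ) (x y : V) :
    (Nat.card (Wk G m x y) : ℝ) = ((G.adjMatrix ℝ) ^ m) x y := by
  induction m generalizing x with
  | zero =>
      rw [Nat.card_congr (wkZeroEquiv G x y), ncard_plift, pow_zero, Matrix.one_apply]
      split <;> simp
  | succ m ih =>
      have e1 : Nat.card (Wk G (m + 1) x y)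
          = ∑ z : V, Nat.card (PLift (G.Adj x z) × Wk G m z y) := by
        rw [Nat.card_congr (Equiv.sigmaFiberEquiv (fun w : Wk G (m+1) x y => w.1 1)).symm,
          mycard_sigma]
        exact Finset.sum_congr rfl fun z _ => Nat.card_congr (wkSuccFiberEquiv G m x y z)
      rw [e1, pow_succ', Matrix.mul_apply]
      push_cast
      refine Finset.sum_congr rfl fun z _ => ?_
      rw [Nat.card_prod]
      push_cast
      rw [ncard_plift, ih z, SimpleGraph.adjMatrix_apply]
      split <;> simp

lemma card_marked [Fintype V] [DecidableEq V] [DecidableRel G.Adj]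
    (R : V → V → V → V → Prop) (cwk : ℕ → V → V → ℝ)
    (hcwk : ∀ m x y, (Nat.card (Wk G m x y) : ℝ) = cwk m x y) :
    (Nat.card (Marked G (p + q + 2) (p + 1) R) : ℝ) =
      ∑ e : (V × V) × V × V,
        (Nat.card (PLift (G.Adj e.1.1 e.1.2 ∧ G.Adj e.2.1 e.2.2 ∧
          R e.1.1 e.1.2 e.2.1 e.2.2)) : ℝ) *
          (cwk p e.1.2 e.2.1 * cwk q e.2.2 e.1.1) := by
  haveI : NeZero (p + q + 2) := ⟨by omega⟩
  rw [Nat.card_congr (Equiv.sigmaFiberEquiv (fun w : Marked G (p + q + 2) (p + 1) R =>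
    ((w.1 0, w.1 ((1 : ℕ) : ZMod (p + q + 2))),
      (w.1 ((p + 1 : ℕ) : ZMod (p + q + 2)), w.1 ((p + 1 + 1 : ℕ) : ZMod (p + q + 2)))))).symm,
    mycard_sigma, Nat.cast_sum]
  refine Finset.sum_congr rfl fun e _ => ?_
  rw [Nat.card_congr (markedFiberEquiv G R e), Nat.card_prod, Nat.card_prod]
  push_cast
  rw [hcwk, hcwk]

lemma ncard3 (P1 P2 P3 : Prop) [Decidable P1] [Decidable P2] [Decidable P3] :
    ((Nat.card (PLift (P1 ∧ P2 ∧ P3)) : ℝ)) =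
      (if P1 then (1 : ℝ) else 0) * (if P2 then 1 else 0) * (if P3 then 1 else 0) := by
  by_cases h1 : P1 <;> by_cases h2 : P2 <;> by_cases h3 : P3 <;>
    simp [ncard_plift, h1, h2, h3]

lemma sum3_comm {α : Type*} [Fintype α] (g : α → α → α → ℝ) :
    ∑ a, ∑ b, ∑ c, g a b c = ∑ c, ∑ b, ∑ a, g a b c := by
  calc ∑ a, ∑ b, ∑ c, g a b c
      = ∑ b, ∑ a, ∑ c, g a b c := Finset.sum_comm
    _ = ∑ b, ∑ c, ∑ a, g a b c := Finset.sum_congr rfl fun b _ => Finset.sum_comm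
    _ = ∑ c, ∑ b, ∑ a, g a b c := Finset.sum_comm

lemma trace_four [Fintype V] [DecidableEq V] (B M B' N : Matrix V V ℝ) :
    (∑ e : (V × V) × V × V,
      B e.1.1 e.1.2 * M e.1.2 e.2.1 * B' e.2.1 e.2.2 * N e.2.2 e.1.1)
      = (B * M * B' * N).trace := by
  simp only [Fintype.sum_prod_type]
  rw [Matrix.trace]
  refine Finset.sum_congr rfl fun x _ => ?_
  have h1 : (B * M * B' * N).diag x = ∑ w, ∑ z, ∑ y,
      B x y * M y z * B' z w * N w x := by
    rw [Matrix.diag_apply, Matrix.mul_apply]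
    refine Finset.sum_congr rfl fun w _ => ?_
    rw [Matrix.mul_apply, Finset.sum_mul]
    refine Finset.sum_congr rfl fun z _ => ?_
    rw [Matrix.mul_apply, Finset.sum_mul, Finset.sum_mul]
  rw [h1, sum3_comm]

lemma U_sum [Fintype V] [DecidableEq V] [DecidableRel G.Adj] (p q : ℕ) :
    (∑ e : (V × V) × V × V,
      (Nat.card (PLift (G.Adj e.1.1 e.1.2 ∧ G.Adj e.2.1 e.2.2 ∧ e.1.1 = e.2.1)) : ℝ) *
        (((G.adjMatrix ℝ) ^ p) e.1.2 e.2.1 * ((G.adjMatrix ℝ) ^ q) e.2.2 e.1.1))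
      = ∑ u : V, ((G.adjMatrix ℝ) ^ (p + 1)) u u * ((G.adjMatrix ℝ) ^ (q + 1)) u u := by
  simp only [Fintype.sum_prod_type]
  refine Finset.sum_congr rfl fun x _ => ?_
  rw [pow_succ', Matrix.mul_apply, pow_succ', Matrix.mul_apply, Finset.sum_mul_sum]
  refine Finset.sum_congr rfl fun y _ => ?_
  have key : ∀ z : V, (∑ w, (Nat.card (PLift (G.Adj x y ∧ G.Adj z w ∧ x = z)) : ℝ) *
      (((G.adjMatrix ℝ) ^ p) y z * ((G.adjMatrix ℝ) ^ q) w x))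
      = if x = z then ∑ w, (G.adjMatrix ℝ x y * ((G.adjMatrix ℝ) ^ p) y x) *
          (G.adjMatrix ℝ x w * ((G.adjMatrix ℝ) ^ q) w x) else 0 := by
    intro z
    by_cases hxz : x = z
    · subst hxz
      rw [if_pos rfl]
      refine Finset.sum_congr rfl fun w _ => ?_
      rw [ncard3]
      simp only [SimpleGraph.adjMatrix_apply, eq_self_iff_true, if_true]
      ring
    · rw [if_neg hxz]
      refine Finset.sum_eq_zero fun w _ => ?_
      rw [ncard3, if_neg hxz]
      ring
  rw [Finset.sum_congr rfl fun z _ => key z, Finset.sum_ite_eq]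
  simp

lemma adjMatrix_isHermitian [Fintype V] [DecidableEq V] [DecidableRel G.Adj] :
    (G.adjMatrix ℝ).IsHermitian := by
  unfold Matrix.IsHermitian
  ext a b
  simp only [Matrix.conjTranspose_apply, SimpleGraph.adjMatrix_apply, star_trivial]
  by_cases h : G.Adj a b
  · rw [if_pos h, if_pos (G.adj_symm h)]
  · rw [if_neg h, if_neg (fun h' => h (G.adj_symm h'))]

/-- the per-color matrix of a coloring. -/
def colMat [DecidableRel G.Adj] {C : Type*} [DecidableEq C] (φ : Sym2 V → C) (c : C) :
    Matrix V V ℝ :=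
  Matrix.of fun a b => (if G.Adj a b then (1 : ℝ) else 0) * (if φ s(a, b) = c then 1 else 0)

lemma colMat_isHermitian [DecidableRel G.Adj] {C : Type*} [DecidableEq C]
    (φ : Sym2 V → C) (c : C) : (colMat G φ c).IsHermitian := by
  unfold Matrix.IsHermitian
  ext a b
  simp only [Matrix.conjTranspose_apply, colMat, Matrix.of_apply, star_trivial]
  rw [Sym2.eq_swap]
  by_cases h : G.Adj a b
  · rw [if_pos h, if_pos (G.adj_symm h)]
  · rw [if_neg h, if_neg (fun h' => h (G.adj_symm h'))]

lemma F_sum [Fintype V] [DecidableEq V] [DecidableRel G.Adj] {C : Type*} [DecidableEq C]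
    (φ : Sym2 V → C) (p q : ℕ) :
    (∑ e : (V × V) × V × V,
      (Nat.card (PLift (G.Adj e.1.1 e.1.2 ∧ G.Adj e.2.1 e.2.2 ∧
        φ s(e.1.1, e.1.2) = φ s(e.2.1, e.2.2))) : ℝ) *
        (((G.adjMatrix ℝ) ^ p) e.1.2 e.2.1 * ((G.adjMatrix ℝ) ^ q) e.2.2 e.1.1))
      = ∑ c ∈ Finset.image (fun ab : V × V => φ s(ab.1, ab.2)) Finset.univ,
          (colMat G φ c * (G.adjMatrix ℝ) ^ p * colMat G φ c * (G.adjMatrix ℝ) ^ q).trace := by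
  set K := Finset.image (fun ab : V × V => φ s(ab.1, ab.2)) Finset.univ with hK
  have key : ∀ e : (V × V) × V × V,
      (Nat.card (PLift (G.Adj e.1.1 e.1.2 ∧ G.Adj e.2.1 e.2.2 ∧
        φ s(e.1.1, e.1.2) = φ s(e.2.1, e.2.2))) : ℝ)
      = ∑ c ∈ K, colMat G φ c e.1.1 e.1.2 * colMat G φ c e.2.1 e.2.2 := by
    rintro ⟨⟨x, y⟩, z, w⟩
    simp only [colMat, Matrix.of_apply]
    rw [ncard3]
    by_cases h1 : G.Adj x y
    · by_cases h2 : G.Adj z w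
      · by_cases h3 : φ s(x, y) = φ s(z, w)
        · rw [if_pos h1, if_pos h2, if_pos h3]
          have step1 : ∀ c, ((1 : ℝ) * if φ s(x, y) = c then 1 else 0) *
              ((1 : ℝ) * if φ s(z, w) = c then 1 else 0) = if φ s(x, y) = c then 1 else 0 := by
            intro c
            rw [← h3]
            split <;> norm_num
          rw [Finset.sum_congr rfl fun c _ => step1 c, Finset.sum_ite_eq, if_pos (by
            rw [hK]; exact Finset.mem_image.mpr ⟨(x, y), Finset.mem_univ _, rfl⟩)]
          norm_num
        · rw [if_neg h3, mul_zero]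
          refine Eq.symm (Finset.sum_eq_zero fun c hc => ?_)
          by_cases e1 : φ s(x, y) = c
          · have e2 : ¬ (φ s(z, w) = c) := fun e2 => h3 (e1.trans e2.symm)
            rw [if_neg e2]
            ring
          · rw [if_neg e1]
            ring
      · rw [if_neg h2]
        simp
    · rw [if_neg h1]
      simp
  rw [Finset.sum_congr rfl fun e _ => by rw [key e, Finset.sum_mul]]
  rw [Finset.sum_comm]
  refine Finset.sum_congr rfl fun c _ => ?_
  rw [← trace_four]
  refine Finset.sum_congr rfl fun e _ => ?_
  ring

end Comb

lemma stdBasis_isHermitian {ι : Type*} [Fintype ι] [DecidableEq ι] (u : ι) :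
    (Matrix.single u u (1 : ℝ)).IsHermitian := by
  unfold Matrix.IsHermitian
  ext a b
  simp only [Matrix.conjTranspose_apply, star_trivial, Matrix.single, Matrix.of_apply]
  by_cases h1 : u = a <;> by_cases h2 : u = b <;> simp [h1, h2]

lemma trace_EME {ι : Type*} [Fintype ι] [DecidableEq ι] (M N : Matrix ι ι ℝ) (u : ι) :
    (Matrix.single u u (1 : ℝ) * M * Matrix.single u u 1 * N).trace
      = M u u * N u u := by
  have h1 : ∀ (P : Matrix ι ι ℝ) (a b : ι),
      (Matrix.single u u (1 : ℝ) * P) a b = if u = a then P u b else 0 := by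
    intro P a b
    simp [Matrix.mul_apply, Matrix.single, Matrix.of_apply, ite_and, ite_mul,
      zero_mul, one_mul, Finset.sum_ite_eq]
  rw [Matrix.mul_assoc (Matrix.single u u 1 * M)]
  simp [Matrix.trace, Matrix.mul_apply, h1, ite_mul, zero_mul, mul_ite, mul_zero,
    Finset.sum_ite_eq]

lemma diag_mul_ineq {ι : Type*} [Fintype ι] [DecidableEq ι] (A : Matrix ι ι ℝ)
    (hA : A.IsHermitian) (c d m : ℕ) (h : c % 2 = d % 2) (hm : Even m) (u : ι) :
    (A ^ (c + m)) u u * (A ^ (d + m)) u u ≤ (A ^ m) u u * (A ^ (c + d + m)) u u := by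
  have h0 := trace_ineq A (Matrix.single u u 1) hA (stdBasis_isHermitian u) c d m h hm
  rwa [trace_EME, trace_EME] at h0

/-- The set of closed `2k`-walks `v₀v₁⋯v_{2k}` in `G` (with `v₀ = v_{2k}`, encoded as maps
`ZMod (2k) → V` with consecutive vertices adjacent) that are vertex-degenerate at `(0, s+1)`,
i.e. satisfy `v₀ = v_{s+1}`. -/
def VertexDegWalk {V : Type*} (G : SimpleGraph V) (k s : ℕ) : Type _ :=
  {v : ZMod (2 * k) → V // (∀ i, G.Adj (v i) (v (i + 1))) ∧
    v 0 = v ((s + 1 : ℕ) : ZMod (2 * k))}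

/-- Let `k ≥ 2` and let `G` be a graph with a proper edge coloring `φ`.
Then `|U_s| ≤ |U₁|` for every `1 ≤ s ≤ 2k−3`, and `|F_t| ≤ |F₁|` for every `1 ≤ t ≤ 2k−1`. -/
theorem vertexDeg_le_and_colorDeg_le {V C : Type*} [Fintype V] (k : ℕ) (hk : 2 ≤ k)
    (G : SimpleGraph V) (φ : Sym2 V → C)
    (hφ : ∀ ⦃a b c : V⦄, G.Adj a b → G.Adj a c → b ≠ c → φ s(a, b) ≠ φ s(a, c)) :
    (∀ s : ℕ, 1 ≤ s → s ≤ 2 * k - 3 →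
      Nat.card (VertexDegWalk G k s) ≤ Nat.card (VertexDegWalk G k 1)) ∧
    (∀ t : ℕ, 1 ≤ t → t ≤ 2 * k - 1 →
      Nat.card (ColorDegWalk G φ k t) ≤ Nat.card (ColorDegWalk G φ k 1)) := by
  classical
  letI : DecidableRel G.Adj := fun a b => Classical.propDecidable _
  set A := G.adjMatrix ℝ with hA_def
  have hA : A.IsHermitian := adjMatrix_isHermitian G
  constructor
  · -- vertex-degenerate part
    have hUs : ∀ s' : ℕ, 1 ≤ s' → s' ≤ 2 * k - 3 →
        (Nat.card (VertexDegWalk G k s') : ℝ)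
          = ∑ u : V, (A ^ (s' + 1)) u u * (A ^ ((2 * k - s' - 2) + 1)) u u := by
      intro s' h1 h2
      have hcong : Nat.card (VertexDegWalk G k s')
          = Nat.card (Marked G (2 * k) (s' + 1) (fun a _ c _ => a = c)) :=
        Nat.card_congr (Equiv.subtypeEquivRight fun v => Iff.rfl)
      set q' := 2 * k - s' - 2 with hq'
      rw [hcong, show 2 * k = s' + q' + 2 from by omega,
        card_marked G (fun a _ c _ => a = c) (fun m x y => (A ^ m) x y) (card_wk G),
        U_sum]
    intro s hs1 hs2
    have e_s := hUs s hs1 hs2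
    have e_1 := hUs 1 le_rfl (by omega)
    rw [← Nat.cast_le (α := ℝ), e_s, e_1]
    refine Finset.sum_le_sum fun u _ => ?_
    have key := diag_mul_ineq A hA (s - 1) (2 * k - s - 2 - 1) 2 (by omega) (by decide) u
    rw [show s + 1 = s - 1 + 2 from by omega,
      show (2 * k - s - 2) + 1 = (2 * k - s - 2 - 1) + 2 from by omega,
      show (1 : ℕ) + 1 = 2 from rfl,
      show (2 * k - 1 - 2) + 1 = (s - 1) + (2 * k - s - 2 - 1) + 2 from by omega]
    exact key
  · -- color-degenerate part
    have hFt : ∀ t' : ℕ, 1 ≤ t' → t' ≤ 2 * k - 1 →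
        (Nat.card (ColorDegWalk G φ k t') : ℝ)
          = ∑ c ∈ Finset.image (fun ab : V × V => φ s(ab.1, ab.2)) Finset.univ,
              (colMat G φ c * A ^ (t' - 1) * colMat G φ c * A ^ (2 * k - t' - 1)).trace := by
      intro t' h1 h2
      obtain ⟨p', rfl⟩ : ∃ p', t' = p' + 1 := ⟨t' - 1, by omega⟩
      have c1 : ((1 : ℕ) : ZMod (2 * k)) = (1 : ZMod (2 * k)) := Nat.cast_one
      have c2 : ((p' + 1 + 1 : ℕ) : ZMod (2 * k))
          = ((p' + 1 : ℕ) : ZMod (2 * k)) + 1 := by push_cast; ring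
      have hcong : Nat.card (ColorDegWalk G φ k (p' + 1))
          = Nat.card (Marked G (2 * k) (p' + 1) (fun a b c d => φ s(a, b) = φ s(c, d))) :=
        Nat.card_congr (Equiv.subtypeEquivRight fun v => by rw [c1, c2])
      set q' := 2 * k - (p' + 1) - 1 with hq'
      rw [hcong, show 2 * k = p' + q' + 2 from by omega,
        card_marked G (fun a b c d => φ s(a, b) = φ s(c, d))
          (fun m x y => (A ^ m) x y) (card_wk G),
        F_sum, show p' + 1 - 1 = p' from by omega]
    intro t ht1 ht2
    have e_t := hFt t ht1 ht2
    have e_1 := hFt 1 le_rfl (by omega)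
    rw [← Nat.cast_le (α := ℝ), e_t, e_1]
    refine Finset.sum_le_sum fun c hc => ?_
    have key := trace_ineq A (colMat G φ c) hA (colMat_isHermitian G φ c)
      (t - 1) (2 * k - t - 1) 0 (by omega) Even.zero
    rw [show (1 : ℕ) - 1 = 0 from rfl,
      show 2 * k - 1 - 1 = (t - 1) + (2 * k - t - 1) + 0 from by omega,
      show t - 1 = t - 1 + 0 from rfl,
      show 2 * k - t - 1 = 2 * k - t - 1 + 0 from rfl]
    exact key
end

section
/- Let k ≥ 2 and let G be a graph with a proper edge coloring φ. Let D(C_{2k}, G) be the set of degenerate closed 2k-walks in G, let U_s (1 ≤ s ≤ k−1) be the set of closed 2k-walks vertex-degenerate at (0, s+1), and let F_t (1 ≤ t ≤ k) be the set of closed 2k-walks color-degenerate at (0, t). Then |D(C_{2k}, G)| ≤ 2k·( Σ_{s=1}^{k−1} |U_s| + Σ_{t=1}^{k} |F_t| ). -/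
/-- The set of degenerate closed `2k`-walks in `G`: closed `2k`-walks that revisit a vertex
(vertex-degenerate at some pair `(i, j)` of distinct indices modulo `2k`) or repeat a color
(color-degenerate at some pair `(i, j)` of distinct indices modulo `2k`). -/
def DegenerateWalk {V C : Type*} (G : SimpleGraph V) (φ : Sym2 V → C) (k : ℕ) : Type _ :=
  {v : ZMod (2 * k) → V // (∀ i, G.Adj (v i) (v (i + 1))) ∧
    ((∃ i j : ZMod (2 * k), i ≠ j ∧ v i = v j) ∨
     (∃ i j : ZMod (2 * k), i ≠ j ∧ φ s(v i, v (i + 1)) = φ s(v j, v (j + 1))))}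

section Aux

variable {V C : Type*} {G : SimpleGraph V} {φ : Sym2 V → C} {k : ℕ}

private lemma rot_adj (v : ZMod (2 * k) → V) (hadj : ∀ i, G.Adj (v i) (v (i + 1)))
    (r : ZMod (2 * k)) : ∀ x, G.Adj (v (x + r)) (v (x + r + 1)) := fun x => hadj (x + r)

private lemma vertex_aux (hk : 2 ≤ k) (v : ZMod (2 * k) → V)
    (hadj : ∀ i, G.Adj (v i) (v (i + 1)))
    {i j : ZMod (2 * k)} (hij : i ≠ j) (heq : v i = v j) (hd : (j - i).val ≤ k) :
    ∃ s ∈ Finset.Icc 1 (k - 1), v (0 + i) = v (((s + 1 : ℕ) : ZMod (2 * k)) + i) := by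
  haveI : NeZero (2 * k) := ⟨by omega⟩
  have hcast : (((j - i).val : ℕ) : ZMod (2 * k)) = j - i := ZMod.natCast_rightInverse _
  have hd0 : (j - i).val ≠ 0 := by
    simp only [ne_eq, ZMod.val_eq_zero, sub_eq_zero]
    exact fun h => hij h.symm
  have hd1 : (j - i).val ≠ 1 := by
    intro h1
    have hj : j = i + 1 := by
      have : j - i = 1 := by rw [← hcast, h1, Nat.cast_one]
      have := sub_eq_iff_eq_add.mp this
      rw [this]; ring
    exact (G.ne_of_adj (hadj i)) (heq.trans (by rw [hj]))
  refine ⟨(j - i).val - 1, Finset.mem_Icc.mpr ⟨by omega, by omega⟩, ?_⟩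
  have h1 : ((j - i).val - 1 + 1 : ℕ) = (j - i).val := by omega
  have h2 : (j - i) + i = j := by ring
  rw [zero_add, h1, hcast, h2]
  exact heq

private lemma color_aux (hk : 2 ≤ k) (v : ZMod (2 * k) → V)
    {i j : ZMod (2 * k)} (hij : i ≠ j)
    (heq : φ s(v i, v (i + 1)) = φ s(v j, v (j + 1))) (hd : (j - i).val ≤ k) :
    ∃ t ∈ Finset.Icc 1 k, φ s(v (0 + i), v (1 + i)) =
      φ s(v (((t : ℕ) : ZMod (2 * k)) + i), v (((t : ℕ) : ZMod (2 * k)) + 1 + i)) := by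
  haveI : NeZero (2 * k) := ⟨by omega⟩
  have hcast : (((j - i).val : ℕ) : ZMod (2 * k)) = j - i := ZMod.natCast_rightInverse _
  have hd0 : (j - i).val ≠ 0 := by
    simp only [ne_eq, ZMod.val_eq_zero, sub_eq_zero]
    exact fun h => hij h.symm
  refine ⟨(j - i).val, Finset.mem_Icc.mpr ⟨by omega, hd⟩, ?_⟩
  have e1 : (0 : ZMod (2 * k)) + i = i := by ring
  have e2 : (1 : ZMod (2 * k)) + i = i + 1 := by ring
  have e3 : (((j - i).val : ℕ) : ZMod (2 * k)) + i = j := by rw [hcast]; ring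
  have e4 : (((j - i).val : ℕ) : ZMod (2 * k)) + 1 + i = j + 1 := by rw [hcast]; ring
  rw [e1, e2, e3, e4]
  exact heq

end Aux

/-- Let `k ≥ 2` and let `G` be a graph with a proper edge coloring `φ`. Then
`|D(C_{2k}, G)| ≤ 2k·( Σ_{s=1}^{k−1} |U_s| + Σ_{t=1}^{k} |F_t| )`. -/
theorem degenerate_card_le {V C : Type*} [Fintype V] (k : ℕ) (hk : 2 ≤ k)
    (G : SimpleGraph V) (φ : Sym2 V → C)
    (hφ : ∀ ⦃a b c : V⦄, G.Adj a b → G.Adj a c → b ≠ c → φ s(a, b) ≠ φ s(a, c)) :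
    Nat.card (DegenerateWalk G φ k) ≤
      2 * k * ((∑ s ∈ Finset.Icc 1 (k - 1), Nat.card (VertexDegWalk G k s)) +
        (∑ t ∈ Finset.Icc 1 k, Nat.card (ColorDegWalk G φ k t))) := by
  classical
  haveI : NeZero (2 * k) := ⟨by omega⟩
  haveI hFV : ∀ s, Fintype (VertexDegWalk G k s) := fun _ => Subtype.fintype _
  haveI hFC : ∀ t, Fintype (ColorDegWalk G φ k t) := fun _ => Subtype.fintype _
  let A := Σ s : Finset.Icc 1 (k - 1), VertexDegWalk G k s
  let B := Σ t : Finset.Icc 1 k, ColorDegWalk G φ k t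
  let unwrap : A ⊕ B → (ZMod (2 * k) → V) := Sum.elim (fun x => x.2.1) (fun x => x.2.1)
  have key : ∀ v : DegenerateWalk G φ k, ∃ r : ZMod (2 * k), ∃ x : A ⊕ B,
      unwrap x = fun y => v.1 (y + r) := by
    rintro ⟨v, hadj, hdeg⟩
    have hadj' : ∀ r x, G.Adj (v (x + r)) (v (x + 1 + r)) := fun r x => by
      have := hadj (x + r)
      rwa [show x + r + 1 = x + 1 + r from by ring] at this
    have hswap : ∀ i j : ZMod (2 * k), i ≠ j → ¬(j - i).val ≤ k → (i - j).val ≤ k := by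
      intro i j hij hd
      haveI : NeZero (j - i) := ⟨sub_ne_zero_of_ne hij.symm⟩
      have h1 : (i - j).val = 2 * k - (j - i).val := by
        rw [show i - j = -(j - i) from by ring]
        exact ZMod.val_neg_of_ne_zero _
      have h2 : (j - i).val < 2 * k := ZMod.val_lt _
      omega
    rcases hdeg with ⟨i, j, hij, heq⟩ | ⟨i, j, hij, heq⟩
    · by_cases hd : (j - i).val ≤ k
      · obtain ⟨s, hs, hcond⟩ := vertex_aux hk v hadj hij heq hd
        exact ⟨i, Sum.inl ⟨⟨s, hs⟩, ⟨fun y => v (y + i), fun x => hadj' i x, hcond⟩⟩, rfl⟩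
      · obtain ⟨s, hs, hcond⟩ := vertex_aux hk v hadj hij.symm heq.symm (hswap i j hij hd)
        exact ⟨j, Sum.inl ⟨⟨s, hs⟩, ⟨fun y => v (y + j), fun x => hadj' j x, hcond⟩⟩, rfl⟩
    · by_cases hd : (j - i).val ≤ k
      · obtain ⟨t, ht, hcond⟩ := color_aux hk v hij heq hd
        exact ⟨i, Sum.inr ⟨⟨t, ht⟩, ⟨fun y => v (y + i), fun x => hadj' i x, hcond⟩⟩, rfl⟩
      · obtain ⟨t, ht, hcond⟩ := color_aux hk v hij.symm heq.symm (hswap i j hij hd)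
        exact ⟨j, Sum.inr ⟨⟨t, ht⟩, ⟨fun y => v (y + j), fun x => hadj' j x, hcond⟩⟩, rfl⟩
  choose r x hx using key
  have hinj : Function.Injective (fun v : DegenerateWalk G φ k => (r v, x v)) := by
    intro v v' h
    have h1 : r v = r v' := congrArg Prod.fst h
    have h2 : x v = x v' := congrArg Prod.snd h
    have e : (fun y => v.1 (y + r v)) = fun y => v'.1 (y + r v') := by
      rw [← hx v, ← hx v', h2]
    apply Subtype.ext
    funext y
    have := congrFun e (y - r v)
    rw [← h1] at this
    rw [show y = y - r v + r v from by ring]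
    exact this
  have hcard : Nat.card (DegenerateWalk G φ k) ≤ Nat.card (ZMod (2 * k) × (A ⊕ B)) :=
    Nat.card_le_card_of_injective _ hinj
  have hA : Nat.card A = ∑ s ∈ Finset.Icc 1 (k - 1), Nat.card (VertexDegWalk G k s) := by
    rw [Nat.card_eq_fintype_card, Fintype.card_sigma,
      ← Finset.sum_coe_sort (Finset.Icc 1 (k - 1))
        (fun s => Nat.card (VertexDegWalk G k s))]
    simp [Nat.card_eq_fintype_card]
  have hB : Nat.card B = ∑ t ∈ Finset.Icc 1 k, Nat.card (ColorDegWalk G φ k t) := by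
    rw [Nat.card_eq_fintype_card, Fintype.card_sigma,
      ← Finset.sum_coe_sort (Finset.Icc 1 k)
        (fun t => Nat.card (ColorDegWalk G φ k t))]
    simp [Nat.card_eq_fintype_card]
  rw [Nat.card_prod, Nat.card_sum, Nat.card_zmod, hA, hB] at hcard
  exact hcard
end

section
/- Let G be a graph with a proper edge coloring and minimum degree δ(G) ≥ 1. Then there exists a graph G' with a proper edge coloring such that: (1) |V(G)| ≤ |V(G')| ≤ 4·e(G)/δ(G) and every vertex of G' has degree between δ(G)/2 and δ(G); and (2) there is a color-preserving graph homomorphism ψ from G' to G, i.e., a homomorphism such that for every edge uv of G' the color of uv in G' equals the color of ψ(u)ψ(v) in G. In particular, if G' contains a rainbow cycle, then so does G. -/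
/-!
Split every vertex `v` of degree `d(v)` into `k(v) = ⌈d(v)/δ⌉` copies and distribute the `d(v)`
edges at `v` among the copies by residue modulo `k(v)`. Each copy then receives between
`⌊d(v)/k(v)⌋` and `⌈d(v)/k(v)⌉` edges, which lies in `[δ/2, δ]`, and
`∑ k(v) · δ ≤ ∑ 2 d(v) = 4 e(G)`.
Projecting each copy to its vertex is a homomorphism that is injective on every neighbourhood,
so the pulled-back coloring stays proper, and a rainbow cycle projects to a closed walk with
distinct edge colors, which contains a rainbow cycle.
-/

universe u v

open Finset SimpleGraph

namespace Nat

theorem mul_add_one_div_two_le {k δ d : ℕ} (h : k * δ < d + δ) (hδd : δ ≤ d) :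
    k * ((δ + 1) / 2) ≤ d := by
  rcases k with _ | _ | m
  · simp
  · omega
  · obtain rfl | hδ := Nat.eq_zero_or_pos δ
    · simp
    have := Nat.mul_le_mul_left (m + 2) (Nat.div_mul_le_self (δ + 1) 2)
    nlinarith [Nat.le_mul_of_pos_right m hδ]

theorem le_ceilDiv_mul {d δ : ℕ} (hδ : 0 < δ) : d ≤ d ⌈/⌉ δ * δ := by
  simpa [mul_comm] using le_smul_ceilDiv (b := d) hδ

theorem ceilDiv_mul_lt {d δ : ℕ} (hδ : 0 < δ) : d ⌈/⌉ δ * δ < d + δ := by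
  have := Nat.div_mul_le_self (d + δ - 1) δ
  rw [ceilDiv_eq_add_pred_div]
  omega

theorem card_filter_mod_eq_le {d k m i : ℕ} (hd : d ≤ k * m) :
    #{t ∈ range d | t % k = i} ≤ m := by
  rw [← card_range m]
  refine card_le_card_of_injOn (· / k) (fun t ht => ?_) (fun s hs t ht hst => ?_)
  · simp only [coe_filter, mem_range, Set.mem_ofPred_eq, coe_range, Set.mem_Iio] at ht ⊢
    exact Nat.div_lt_of_lt_mul (by omega)
  · simp only [coe_filter, mem_range, Set.mem_ofPred_eq] at hs ht
    rw [← Nat.div_add_mod s k, ← Nat.div_add_mod t k, hs.2, ht.2, show s / k = t / k from hst]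

theorem le_card_filter_mod_eq {d k m i : ℕ} (hi : i < k) (hd : k * m ≤ d) :
    m ≤ #{t ∈ range d | t % k = i} := by
  rw [← card_range m]
  refine card_le_card_of_injOn (fun q => i + k * q) (fun q hq => ?_) (fun q _ r _ hqr => ?_)
  · simp only [coe_range, Set.mem_Iio, coe_filter, mem_range, Set.mem_ofPred_eq] at hq ⊢
    refine ⟨?_, by simp [Nat.mod_eq_of_lt hi]⟩
    nlinarith
  · exact Nat.eq_of_mul_eq_mul_left (by omega) (Nat.add_left_cancel hqr)

end Nat

namespace SimpleGraph

variable {V : Type u} {C : Type v}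

theorem exists_rainbow_isCycle_of_cons {G : SimpleGraph V} (φ : Sym2 V → C) {u v : V}
    (h : G.Adj u v) (p : G.Walk v u) (hp : ((Walk.cons h p).edges.map φ).Nodup) :
    ∃ (x : V) (c : G.Walk x x), c.IsCycle ∧ (c.edges.map φ).Nodup := by
  classical
  have hsub : (Walk.cons h p.bypass).edges ⊆ (Walk.cons h p).edges :=
    List.cons_subset_cons _ p.edges_bypass_subset_edges
  have huv : s(u, v) ∉ p.bypass.edges := fun he =>
    (List.nodup_cons.mp hp.of_map).1 (p.edges_bypass_subset_edges he)
  have hcyc := Path.cons_isCycle ⟨p.bypass, p.bypass_isPath⟩ h huv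
  refine ⟨u, _, hcyc, hcyc.edges_nodup.map_on fun e he e' he' hee' => ?_⟩
  exact List.inj_on_of_nodup_map hp (hsub he) (hsub he') hee'

theorem exists_rainbow_isCycle_of_hom {V' : Type*} {G : SimpleGraph V} {G' : SimpleGraph V'}
    (f : G' →g G) (φ : Sym2 V → C) (φ' : Sym2 V' → C)
    (hφ' : ∀ ⦃a b : V'⦄, G'.Adj a b → φ' s(a, b) = φ s(f a, f b)) {u : V'} (c : G'.Walk u u)
    (hc : c.IsCycle) (hrb : (c.edges.map φ').Nodup) :
    ∃ (x : V) (c : G.Walk x x), c.IsCycle ∧ (c.edges.map φ).Nodup := by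
  cases c with
  | nil => exact absurd rfl hc.ne_nil
  | cons h p =>
    refine exists_rainbow_isCycle_of_cons φ (f.map_adj h) (p.map f) ?_
    have hcolor : ∀ e ∈ (Walk.cons h p).edges, (φ ∘ Sym2.map f) e = φ' e := by
      intro e he
      induction e using Sym2.ind with
      | _ a b => exact (hφ' ((Walk.cons h p).adj_of_mem_edges he)).symm
    change (((Walk.cons h p).map f).edges.map φ).Nodup
    rwa [Walk.edges_map, List.map_map, List.map_congr_left hcolor]

/-- Vertex `v` is split into `k v` copies; the edge `vu` is attached to copy `ℓ v u % k v` of `v`,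
where `ℓ v` numbers the neighbours of `v`. -/
def split (G : SimpleGraph V) (k : V → ℕ) (ℓ : V → V → ℕ) : SimpleGraph (Σ v, Fin (k v)) where
  Adj a b := G.Adj a.1 b.1 ∧ ℓ a.1 b.1 % k a.1 = a.2 ∧ ℓ b.1 a.1 % k b.1 = b.2
  symm := ⟨fun _ _ h => ⟨h.1.symm, h.2.2, h.2.1⟩⟩
  loopless := ⟨fun a h => G.loopless.irrefl a.1 h.1⟩

namespace split

variable {G : SimpleGraph V} {k : V → ℕ} {ℓ : V → V → ℕ}

theorem adj_iff {a b : Σ v, Fin (k v)} :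
    (G.split k ℓ).Adj a b ↔ G.Adj a.1 b.1 ∧ ℓ a.1 b.1 % k a.1 = a.2 ∧ ℓ b.1 a.1 % k b.1 = b.2 :=
  Iff.rfl

def fst : G.split k ℓ →g G where
  toFun := Sigma.fst
  map_rel' h := (adj_iff.mp h).1

theorem eq_of_adj_of_adj_of_fst_eq {a b c : Σ v, Fin (k v)} (hab : (G.split k ℓ).Adj a b)
    (hac : (G.split k ℓ).Adj a c) (hbc : b.1 = c.1) : b = c := by
  obtain ⟨w, i⟩ := b
  obtain ⟨w', j⟩ := c
  obtain rfl : w = w' := hbc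
  obtain ⟨-, -, hi⟩ := hab
  obtain ⟨-, -, hj⟩ := hac
  exact congrArg _ (Fin.ext (hi.symm.trans hj))

theorem isProper_comp_map_fst {φ : Sym2 V → C}
    (hφ : ∀ ⦃a b c : V⦄, G.Adj a b → G.Adj a c → b ≠ c → φ s(a, b) ≠ φ s(a, c))
    ⦃a b c : Σ v, Fin (k v)⦄ (hab : (G.split k ℓ).Adj a b) (hac : (G.split k ℓ).Adj a c)
    (hbc : b ≠ c) : φ (s(a, b).map Sigma.fst) ≠ φ (s(a, c).map Sigma.fst) :=
  hφ (adj_iff.mp hab).1 (adj_iff.mp hac).1 fun h => hbc (eq_of_adj_of_adj_of_fst_eq hab hac h)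

theorem card_neighborSet [Fintype V] [DecidableRel G.Adj] (hk : ∀ v, 0 < k v)
    (hℓ : ∀ v, Set.BijOn (ℓ v) (G.neighborSet v) (Set.Iio (G.degree v)))
    (v : V) (i : Fin (k v)) :
    Nat.card ((G.split k ℓ).neighborSet ⟨v, i⟩) = #{t ∈ range (G.degree v) | t % k v = i} := by
  rw [← Set.ncard_coe_finset, Nat.card_coe_set_eq]
  refine Set.BijOn.ncard_eq (f := fun b => ℓ v b.1) ⟨fun b hb => ?_, fun b hb c hc hbc => ?_, ?_⟩
  · simp only [coe_filter, mem_range, Set.mem_ofPred_eq]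
    obtain ⟨hvb, hi, -⟩ := hb
    exact ⟨(hℓ v).mapsTo hvb, hi⟩
  · exact eq_of_adj_of_adj_of_fst_eq hb hc ((hℓ v).injOn (adj_iff.mp hb).1 (adj_iff.mp hc).1 hbc)
  · rintro t ht
    simp only [coe_filter, mem_range, Set.mem_ofPred_eq] at ht
    obtain ⟨u, hu, rfl⟩ := (hℓ v).surjOn ht.1
    exact ⟨⟨u, ℓ u v % k u, Nat.mod_lt _ (hk u)⟩, ⟨hu, ht.2, rfl⟩, rfl⟩

end split

theorem exists_bijOn_neighborSet_Iio_degree [Fintype V] (G : SimpleGraph V) [DecidableRel G.Adj] :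
    ∃ ℓ : V → V → ℕ, ∀ v, Set.BijOn (ℓ v) (G.neighborSet v) (Set.Iio (G.degree v)) := by
  choose ℓ hℓ using fun v => (G.neighborSet v).toFinite.exists_bijOn_of_encard_eq
    (t := Set.Iio (G.degree v)) (by simp [← coe_neighborFinset, ← coe_range])
  exact ⟨ℓ, hℓ⟩

theorem sum_mul_minDegree_le [Fintype V] (G : SimpleGraph V) [DecidableRel G.Adj] {k : V → ℕ}
    (hk : ∀ v, k v * G.minDegree < G.degree v + G.minDegree) :
    (∑ v, k v) * G.minDegree ≤ 4 * #G.edgeFinset :=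
  calc (∑ v, k v) * G.minDegree
    _ = ∑ v, k v * G.minDegree := sum_mul _ _ _
    _ ≤ ∑ v, 2 * G.degree v := sum_le_sum fun v _ => by
      have := G.minDegree_le_degree v
      have := hk v
      omega
    _ = 4 * #G.edgeFinset := by rw [← mul_sum, sum_degrees_eq_twice_card_edges]; ring

end SimpleGraph

/-- Let `G` be a graph with a proper edge coloring and minimum degree
`δ(G) ≥ 1`. Then there exists a graph `G'` with a proper edge coloring such that:
(1) `|V(G)| ≤ |V(G')| ≤ 4·e(G)/δ(G)` and every vertex of `G'` has degree between `δ(G)/2`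
and `δ(G)`; and (2) there is a color-preserving graph homomorphism `ψ` from `G'` to `G`.
In particular, if `G'` contains a rainbow cycle, then so does `G`. -/
theorem exists_regularization {V : Type u} {C : Type v} [Fintype V]
    (G : SimpleGraph V) [DecidableRel G.Adj] (φ : Sym2 V → C)
    (hφ : ∀ ⦃a b c : V⦄, G.Adj a b → G.Adj a c → b ≠ c → φ s(a, b) ≠ φ s(a, c))
    (hδ : 1 ≤ G.minDegree) :
    ∃ (V' : Type u) (_ : Fintype V') (G' : SimpleGraph V') (φ' : Sym2 V' → C),
      (∀ ⦃a b c : V'⦄, G'.Adj a b → G'.Adj a c → b ≠ c → φ' s(a, b) ≠ φ' s(a, c)) ∧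
      Fintype.card V ≤ Fintype.card V' ∧
      (Fintype.card V' : ℝ) ≤ 4 * (Nat.card G.edgeSet : ℝ) / (G.minDegree : ℝ) ∧
      (∀ v' : V', G.minDegree ≤ 2 * Nat.card (G'.neighborSet v') ∧
        Nat.card (G'.neighborSet v') ≤ G.minDegree) ∧
      ∃ ψ : V' → V,
        (∀ ⦃a b : V'⦄, G'.Adj a b → G.Adj (ψ a) (ψ b)) ∧
        (∀ ⦃a b : V'⦄, G'.Adj a b → φ' s(a, b) = φ s(ψ a, ψ b)) ∧
        ((∃ (u : V') (w : G'.Walk u u), w.IsCycle ∧ (w.edges.map φ').Nodup) →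
          ∃ (u : V) (w : G.Walk u u), w.IsCycle ∧ (w.edges.map φ).Nodup) := by
  classical
  set δ := G.minDegree
  have hδ : 0 < δ := hδ
  obtain ⟨ℓ, hℓ⟩ := G.exists_bijOn_neighborSet_Iio_degree
  set k : V → ℕ := fun v => G.degree v ⌈/⌉ δ
  have hk_le v : G.degree v ≤ k v * δ := Nat.le_ceilDiv_mul hδ
  have hk_lt v : k v * δ < G.degree v + δ := Nat.ceilDiv_mul_lt hδ
  have hk_pos v : 0 < k v :=
    Nat.pos_of_mul_pos_right ((hδ.trans_le (G.minDegree_le_degree v)).trans_le (hk_le v))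
  refine ⟨Σ v, Fin (k v), inferInstance, G.split k ℓ, fun e => φ (e.map Sigma.fst),
    split.isProper_comp_map_fst hφ, ?_, ?_, fun ⟨v, i⟩ => ?_,
    split.fst, fun _ _ h => split.fst.map_adj h, fun _ _ _ => rfl, fun ⟨_, c, hc, hrb⟩ =>
    exists_rainbow_isCycle_of_hom split.fst φ _ (fun _ _ _ => rfl) c hc hrb⟩
  · exact Fintype.card_le_of_injective (fun v => ⟨v, 0, hk_pos v⟩) fun _ _ h => congrArg Sigma.fst h
  · rw [Fintype.card_sigma, Nat.card_eq_fintype_card, ← edgeFinset_card,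
      le_div_iff₀ (by exact_mod_cast hδ)]
    simp only [Fintype.card_fin]
    exact_mod_cast G.sum_mul_minDegree_le hk_lt
  · rw [split.card_neighborSet hk_pos hℓ]
    refine ⟨?_, Nat.card_filter_mod_eq_le (hk_le v)⟩
    have := Nat.le_card_filter_mod_eq i.isLt
      (Nat.mul_add_one_div_two_le (hk_lt v) (G.minDegree_le_degree v))
    omega
end

section
/- Let k ≥ 2 and let G be an n-vertex bipartite graph with average degree d > 0 such that no proper subgraph of G has average degree larger than d. Then G contains a subgraph G' with bipartition (A, B) such that for some natural number i ≥ 1: (1) |A| ≥ (1/k)·2^{−ki/(k−1)}·n and |B| ≥ n/64; (2) the degree in G' of every vertex a ∈ A lies in the interval [2^{i−6}·d, 2^{i−5}·d]; and (3) the degree in G' of every vertex b ∈ B is at most 4d. -/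
/-!
Let `Y` be the smaller side of the bipartition and `Z` the other one. The vertices of `Z` of
degree more than `4d` span with `Y` a subgraph of average degree at most `d`; this bounds their
number by `|Y|/7` and their total degree by `4d|Y|/7`. So the remaining part `B` of `Z` has at
least `3n/7` vertices and receives at least `3dn/14` edges from `Y`, of which at most `dn/64` go to
vertices of `Y` with fewer than `d/32` neighbours in `B`. Sort the other vertices of `Y` into
dyadic classes by their number of neighbours in `B`. If every class `i` had fewer than
`2^{-ki/(k-1)} n/k` vertices, these would receive at most `(d/32) Σ_i 2^i 2^{-ki/(k-1)} n/k ≤ dn/16`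
edges, as the series is geometric with ratio `2^{-1/(k-1)} ≤ 1 - 1/(2k)`. So some class `A`
is large, and `A` and `B` span the required subgraph.
-/

open Finset

lemma one_le_two_mul_mul_one_sub_two_rpow {k : ℝ} (hk : 1 < k) :
    1 ≤ 2 * k * (1 - 2 ^ (-1 / (k - 1))) := by
  have hk1 : k - 1 ≠ 0 := by linarith
  set t := Real.log 2 / (k - 1) with ht
  have ht0 : 0 < t := div_pos (Real.log_pos one_lt_two) (by linarith)
  have hkt : t * k = Real.log 2 + t := by rw [ht]; field_simp; ring
  have hx : (2 : ℝ) ^ (-1 / (k - 1)) = Real.exp (-t) := by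
    rw [Real.rpow_def_of_pos two_pos, ht]; ring_nf
  have hexp : Real.exp (-t) * (1 + t) ≤ 1 := by
    calc Real.exp (-t) * (1 + t) ≤ Real.exp (-t) * Real.exp t := by
          gcongr; linarith [Real.add_one_le_exp t]
      _ = 1 := by rw [← Real.exp_add]; simp
  rw [hx]
  -- `2k (1 - exp (-t)) (1 + t) ≥ 2kt = 2 log 2 + 2t > 1 + t`
  nlinarith [Real.log_two_gt_d9, Real.exp_pos (-t)]

lemma sum_two_rpow_mul_two_pow_le {k : ℝ} (hk : 1 < k) {n : ℝ} (hn : 0 ≤ n) (t : Finset ℕ) :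
    ∑ i ∈ t, 1 / k * 2 ^ (-(k * i) / (k - 1)) * n * 2 ^ i ≤ 2 * n := by
  have hk1 : k - 1 ≠ 0 := by linarith
  set x : ℝ := 2 ^ (-1 / (k - 1))
  have hx0 : 0 ≤ x := by positivity
  have hterm (i : ℕ) : 1 / k * 2 ^ (-(k * i) / (k - 1)) * n * 2 ^ i = 1 / k * x ^ i * n := by
    rw [mul_right_comm _ n, mul_assoc (1 / k), ← Real.rpow_natCast 2 i, ← Real.rpow_add two_pos,
      ← Real.rpow_natCast x, ← Real.rpow_mul zero_le_two]
    congr 3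
    field_simp
    ring
  have hbound := one_le_two_mul_mul_one_sub_two_rpow hk
  have hx1 : x < 1 := by nlinarith
  have hgeom : ∑ i ∈ t, x ^ i ≤ (1 - x)⁻¹ := by
    rw [← tsum_geometric_of_lt_one hx0 hx1]
    exact (summable_geometric_of_lt_one hx0 hx1).sum_le_tsum t fun i _ => pow_nonneg hx0 i
  have hsum : 1 / k * ∑ i ∈ t, x ^ i ≤ 2 :=
    calc 1 / k * ∑ i ∈ t, x ^ i ≤ 1 / k * (1 - x)⁻¹ := by gcongr
      _ ≤ 2 := by
        rw [one_div, ← mul_inv, inv_le_comm₀ (by nlinarith) two_pos]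
        linarith
  simp_rw [hterm, ← sum_mul, ← mul_sum]
  exact mul_le_mul_of_nonneg_right hsum hn

lemma exists_le_card_filter_eq_of_lt_sum {ι : Type*} (s : Finset ι) (lvl : ι → ℕ) {w : ι → ℝ}
    (hw : ∀ y ∈ s, w y ≤ 2 ^ lvl y) {a : ℕ → ℝ} {M : ℝ}
    (ha : ∀ t : Finset ℕ, ∑ i ∈ t, a i * 2 ^ i ≤ M) (hM : M < ∑ y ∈ s, w y) :
    ∃ y ∈ s, a (lvl y) ≤ #{z ∈ s | lvl z = lvl y} := by
  by_contra! hsmall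
  have hclass : ∀ i ∈ s.image lvl, (#{z ∈ s | lvl z = i} : ℝ) * 2 ^ i ≤ a i * 2 ^ i := by
    simp only [mem_image, forall_exists_index, and_imp]
    rintro _ y hy rfl
    gcongr
    exact (hsmall y hy).le
  have := calc ∑ y ∈ s, w y ≤ ∑ y ∈ s, (2 : ℝ) ^ lvl y := sum_le_sum hw
    _ = ∑ i ∈ s.image lvl, (#{z ∈ s | lvl z = i} : ℝ) * 2 ^ i := by
      rw [sum_comp (fun i => (2 : ℝ) ^ i) lvl]; simp only [nsmul_eq_mul]
    _ ≤ ∑ i ∈ s.image lvl, a i * 2 ^ i := sum_le_sum hclass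
    _ ≤ M := ha _
  linarith

lemma two_pow_log_floor_le {r : ℝ} (hr : 1 ≤ r) : (2 : ℝ) ^ Nat.log 2 ⌊r⌋₊ ≤ r :=
  calc (2 : ℝ) ^ Nat.log 2 ⌊r⌋₊ ≤ ⌊r⌋₊ := by
        exact_mod_cast Nat.pow_log_le_self 2 (Nat.floor_pos.2 hr).ne'
    _ ≤ r := Nat.floor_le (by linarith)

lemma lt_two_pow_log_floor_succ (r : ℝ) : r < 2 ^ (Nat.log 2 ⌊r⌋₊ + 1) :=
  calc r < ⌊r⌋₊ + 1 := Nat.lt_floor_add_one r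
    _ ≤ 2 ^ (Nat.log 2 ⌊r⌋₊ + 1) := by
        exact_mod_cast Nat.lt_pow_succ_log_self one_lt_two _

lemma sum_sub_mul_card_le_sum_filter_le {ι : Type*} (s : Finset ι) (w : ι → ℝ) {c : ℝ}
    (hc : 0 ≤ c) : ∑ y ∈ s, w y - c * #s ≤ ∑ y ∈ s with c ≤ w y, w y := by
  have hsplit := sum_filter_add_sum_filter_not s (c ≤ w ·) w
  have hlow : ∑ y ∈ s with ¬ c ≤ w y, w y ≤ c * #s :=
    calc ∑ y ∈ s with ¬ c ≤ w y, w y ≤ ∑ y ∈ s with ¬ c ≤ w y, c :=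
          sum_le_sum fun y hy => (not_le.1 (mem_filter.1 hy).2).le
      _ ≤ c * #s := by
        rw [sum_const, nsmul_eq_mul, mul_comm]
        gcongr
        exact filter_subset _ s
  linarith

lemma exists_dyadic_class {ι : Type*} (s : Finset ι) (w : ι → ℝ) {c : ℝ} (hc : 0 < c)
    {a : ℕ → ℝ} {M : ℝ} (ha : ∀ t : Finset ℕ, ∑ i ∈ t, a i * 2 ^ i ≤ M)
    (hM : c * M < ∑ y ∈ s with c ≤ w y, w y) :
    ∃ (i : ℕ) (A : Finset ι), A ⊆ s ∧ a (i + 1) ≤ #A ∧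
      ∀ y ∈ A, c * 2 ^ i ≤ w y ∧ w y ≤ c * 2 ^ (i + 1) := by
  set lvl : ι → ℕ := fun y => Nat.log 2 ⌊w y / c⌋₊ + 1
  have hw : ∀ y ∈ s.filter (c ≤ w ·), w y / c ≤ 2 ^ lvl y :=
    fun y _ => (lt_two_pow_log_floor_succ _).le
  have hM' : M < ∑ y ∈ s with c ≤ w y, w y / c := by
    rw [← sum_div, lt_div_iff₀ hc]; linarith
  obtain ⟨y, -, hy⟩ := exists_le_card_filter_eq_of_lt_sum _ lvl hw ha hM'
  refine ⟨Nat.log 2 ⌊w y / c⌋₊, _, (filter_subset _ _).trans (filter_subset _ _), hy, ?_⟩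
  intro z hz
  simp only [mem_filter, lvl, add_left_inj] at hz
  obtain ⟨⟨-, hcz⟩, hlvl⟩ := hz
  rw [← hlvl, ← le_div_iff₀' hc, ← div_le_iff₀' hc]
  exact ⟨two_pow_log_floor_le ((one_le_div hc).2 hcz), (lt_two_pow_log_floor_succ _).le⟩

namespace SimpleGraph

variable {V : Type*} {G : SimpleGraph V}

def betweenSubgraph (G : SimpleGraph V) (s t : Set V) : G.Subgraph where
  verts := s ∪ t
  Adj := (G.between s t).Adj
  adj_sub h := h.1
  edge_vert h := h.2.imp And.left And.left
  symm := (G.between s t).symm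

lemma betweenSubgraph_edgeSet (s t : Set V) :
    (G.betweenSubgraph s t).edgeSet = (G.between s t).edgeSet := by
  ext e
  induction e using Sym2.ind
  rfl

lemma betweenSubgraph_neighborSet_of_mem_left {s t : Set V} (hst : Disjoint s t) {v : V}
    (hv : v ∈ s) : (G.betweenSubgraph s t).neighborSet v = G.neighborSet v ∩ t := by
  ext w
  simp only [Subgraph.mem_neighborSet, betweenSubgraph, between_adj, Set.mem_inter_iff,
    mem_neighborSet, hv, true_and, and_congr_right_iff, or_iff_left_iff_imp, and_imp]
  exact fun _ hvt => absurd hvt (hst.notMem_of_mem_left hv)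

lemma card_neighborSet_betweenSubgraph_of_mem_left [DecidableRel G.Adj] {s t : Finset V}
    (hst : Disjoint s t) {v : V} (hv : v ∈ s) :
    Nat.card ((G.betweenSubgraph s t).neighborSet v) = #{w ∈ t | G.Adj v w} := by
  rw [betweenSubgraph_neighborSet_of_mem_left (disjoint_coe.2 hst) hv, Nat.card_coe_set_eq,
    ← Set.ncard_coe_finset]
  congr 1
  ext w
  simp [and_comm]

lemma Subgraph.card_neighborSet_le_degree [Fintype V] [DecidableRel G.Adj] (H : G.Subgraph)
    (v : V) : Nat.card (H.neighborSet v) ≤ G.degree v := by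
  rw [← card_neighborSet_eq_degree, ← Nat.card_eq_fintype_card]
  exact Nat.card_mono (Set.toFinite _) (H.neighborSet_subset v)

lemma IsBipartiteWith.degree_between_of_subset_right [Fintype V] [DecidableRel G.Adj]
    [DecidableEq V] {s t u : Finset V} (h : G.IsBipartiteWith s t) (hu : u ⊆ t) {v : V}
    (hv : v ∈ u) : (G.between s u).degree v = G.degree v := by
  simp_rw [← card_neighborFinset_eq_degree]
  congr 1
  ext w
  simp only [mem_neighborFinset, between_adj, mem_coe, and_iff_left_iff_imp]
  exact fun hvw => Or.inr ⟨hv, h.mem_of_mem_adj' (hu hv) hvw.symm⟩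

lemma exists_isBipartiteWith_two_mul_card_le [Fintype V] {X : Set V}
    (hbip : ∀ ⦃u v : V⦄, G.Adj u v → (u ∈ X ↔ v ∉ X)) :
    ∃ Y Z : Finset V, G.IsBipartiteWith Y Z ∧ 2 * #Y ≤ Fintype.card V ∧
      Fintype.card V ≤ 2 * #Z := by
  classical
  have hX : G.IsBipartiteWith ↑X.toFinset ↑X.toFinsetᶜ := by
    refine ⟨disjoint_coe.2 disjoint_compl_right, fun u v huv => ?_⟩
    have := hbip huv
    simp only [coe_compl, Set.coe_toFinset, Set.mem_compl_iff]
    tauto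
  have hcard := card_add_card_compl X.toFinset
  rcases le_total #X.toFinset #X.toFinsetᶜ with hle | hle
  · exact ⟨_, _, hX, by omega, by omega⟩
  · exact ⟨_, _, hX.symm, by omega, by omega⟩

def SubgraphsAverageDegreeLE (G : SimpleGraph V) (d : ℝ) : Prop :=
  ∀ H : G.Subgraph, H.verts.Nonempty → 2 * (Nat.card H.edgeSet : ℝ) / (Nat.card H.verts : ℝ) ≤ d

variable [Fintype V] [DecidableRel G.Adj] {Y Z : Finset V} {d : ℝ}

lemma IsBipartiteWith.two_mul_sum_degree_le (hmax : G.SubgraphsAverageDegreeLE d)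
    (h : G.IsBipartiteWith Y Z) {S : Finset V} (hS : S ⊆ Z) :
    2 * ∑ s ∈ S, (G.degree s : ℝ) ≤ d * (#Y + #S) := by
  classical
  have hYS : Disjoint Y S := (disjoint_coe.1 h.disjoint).mono_right hS
  rcases (Y ∪ S).eq_empty_or_nonempty with hempty | hne
  · obtain ⟨rfl, rfl⟩ := union_eq_empty.1 hempty
    simp
  have hverts : Nat.card (G.betweenSubgraph Y S).verts = #Y + #S := by
    rw [← card_union_of_disjoint hYS, ← Set.ncard_coe_finset, coe_union, ← Nat.card_coe_set_eq]
    rfl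
  have hedges : Nat.card (G.betweenSubgraph Y S).edgeSet = ∑ s ∈ S, G.degree s := by
    rw [betweenSubgraph_edgeSet, ← coe_edgeFinset, Nat.card_coe_set_eq, Set.ncard_coe_finset,
      ← isBipartiteWith_sum_degrees_eq_card_edges' (between_isBipartiteWith (disjoint_coe.2 hYS))]
    exact sum_congr rfl fun s hs => h.degree_between_of_subset_right hS hs
  have := hmax (G.betweenSubgraph Y S) (by simpa [betweenSubgraph] using hne)
  have hpos : (0 : ℝ) < #Y + #S := by
    have := card_pos.2 hne
    rw [card_union_of_disjoint hYS] at this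
    exact_mod_cast this
  rw [hverts, hedges, Nat.cast_add, div_le_iff₀ hpos] at this
  push_cast at this
  linarith

lemma IsBipartiteWith.seven_mul_sum_degree_le (hmax : G.SubgraphsAverageDegreeLE d)
    (h : G.IsBipartiteWith Y Z) {S : Finset V} (hS : S ⊆ Z)
    (hdeg : ∀ s ∈ S, 4 * d < G.degree s) :
    7 * ∑ s ∈ S, (G.degree s : ℝ) ≤ 4 * d * #Y := by
  have hlow : 4 * d * #S ≤ ∑ s ∈ S, (G.degree s : ℝ) := by
    simpa [mul_comm] using card_nsmul_le_sum S _ _ fun s hs => (hdeg s hs).le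
  linarith [h.two_mul_sum_degree_le hmax hS]

lemma IsBipartiteWith.card_sub_le_card_filter_degree_le (hmax : G.SubgraphsAverageDegreeLE d)
    (h : G.IsBipartiteWith Y Z) (hd : 0 < d) :
    (#Z : ℝ) - #Y / 7 ≤ #{z ∈ Z | (G.degree z : ℝ) ≤ 4 * d} := by
  set H := {z ∈ Z | ¬ (G.degree z : ℝ) ≤ 4 * d}
  have hdeg : ∀ z ∈ H, 4 * d < G.degree z := fun z hz => not_le.1 (mem_filter.1 hz).2
  have hlow : 4 * d * #H ≤ ∑ z ∈ H, (G.degree z : ℝ) := by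
    simpa [mul_comm] using card_nsmul_le_sum H _ _ fun z hz => (hdeg z hz).le
  have hup := h.seven_mul_sum_degree_le hmax (filter_subset _ Z) hdeg
  have hH : 7 * (#H : ℝ) ≤ #Y := by nlinarith
  rw [← card_filter_add_card_filter_not (s := Z) fun z => (G.degree z : ℝ) ≤ 4 * d]
  push_cast
  linarith

lemma IsBipartiteWith.sum_card_filter_adj_eq (h : G.IsBipartiteWith Y Z) {B : Finset V}
    (hB : B ⊆ Z) : ∑ y ∈ Y, #{b ∈ B | G.Adj y b} = ∑ b ∈ B, G.degree b := by
  refine (sum_card_bipartiteAbove_eq_sum_card_bipartiteBelow G.Adj).trans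
    (sum_congr rfl fun b hb => ?_)
  rw [← card_neighborFinset_eq_degree, isBipartiteWith_bipartiteBelow h (hB hb)]

lemma IsBipartiteWith.card_edgeFinset_sub_le_sum_card_filter_adj
    (hmax : G.SubgraphsAverageDegreeLE d) (h : G.IsBipartiteWith Y Z) :
    (#G.edgeFinset : ℝ) - 4 * d * #Y / 7 ≤
      ∑ y ∈ Y, (#{b ∈ {z ∈ Z | (G.degree z : ℝ) ≤ 4 * d} | G.Adj y b} : ℝ) := by
  have hup := h.seven_mul_sum_degree_le hmax (filter_subset _ Z)
    fun z hz => not_le.1 (mem_filter.1 hz).2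
  have hsplit := sum_filter_add_sum_filter_not Z (fun z => (G.degree z : ℝ) ≤ 4 * d)
    fun z => (G.degree z : ℝ)
  have hZ : ∑ z ∈ Z, (G.degree z : ℝ) = #G.edgeFinset := by
    exact_mod_cast isBipartiteWith_sum_degrees_eq_card_edges' h
  have hlow : ∑ y ∈ Y, (#{b ∈ {z ∈ Z | (G.degree z : ℝ) ≤ 4 * d} | G.Adj y b} : ℝ) =
      ∑ z ∈ Z with (G.degree z : ℝ) ≤ 4 * d, (G.degree z : ℝ) := by
    exact_mod_cast h.sum_card_filter_adj_eq (filter_subset _ Z)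
  linarith

end SimpleGraph

/-- Let `k ≥ 2` and let `G` be an `n`-vertex bipartite graph with average
degree `d > 0` such that no (proper) subgraph of `G` has average degree larger than `d`.
Then `G` contains a subgraph `G'` with bipartition `(A, B)` such that for some natural number
`i ≥ 1`: (1) `|A| ≥ (1/k)·2^{−ki/(k−1)}·n` and `|B| ≥ n/64`; (2) every `a ∈ A` has degree
in `G'` in the interval `[2^{i−6}·d, 2^{i−5}·d]`; and (3) every `b ∈ B` has degree in `G'`
at most `4d`. -/
theorem lopsided_regularization {V : Type*} [Fintype V] (k : ℕ) (hk : 2 ≤ k)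
    (G : SimpleGraph V) (X : Set V)
    (hbip : ∀ ⦃u v : V⦄, G.Adj u v → (u ∈ X ↔ v ∉ X))
    (d : ℝ) (hd : d = 2 * (Nat.card G.edgeSet : ℝ) / (Fintype.card V : ℝ)) (hdpos : 0 < d)
    (hmax : ∀ H : G.Subgraph, H.verts.Nonempty →
      2 * (Nat.card H.edgeSet : ℝ) / (Nat.card H.verts : ℝ) ≤ d) :
    ∃ (G' : G.Subgraph) (A B : Set V) (i : ℕ), 1 ≤ i ∧
      G'.verts = A ∪ B ∧ Disjoint A B ∧
      (∀ ⦃u v : V⦄, G'.Adj u v → (u ∈ A ∧ v ∈ B) ∨ (u ∈ B ∧ v ∈ A)) ∧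
      (1 / (k : ℝ)) * 2 ^ (-((k : ℝ) * i) / ((k : ℝ) - 1)) * (Fintype.card V : ℝ) ≤
        (Nat.card A : ℝ) ∧
      (Fintype.card V : ℝ) / 64 ≤ (Nat.card B : ℝ) ∧
      (∀ a ∈ A, (2 : ℝ) ^ ((i : ℤ) - 6) * d ≤ (Nat.card (G'.neighborSet a) : ℝ) ∧
        (Nat.card (G'.neighborSet a) : ℝ) ≤ (2 : ℝ) ^ ((i : ℤ) - 5) * d) ∧
      (∀ b ∈ B, (Nat.card (G'.neighborSet b) : ℝ) ≤ 4 * d) := by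
  classical
  obtain ⟨Y, Z, hYZ, hY, hZ⟩ := G.exists_isBipartiteWith_two_mul_card_le hbip
  set n := Fintype.card V
  have hn : (0 : ℝ) < n := by
    refine (Nat.cast_nonneg n).lt_of_ne fun hn0 => ?_
    rw [← hn0, div_zero] at hd
    linarith
  have hedges : d * n = 2 * #G.edgeFinset := by
    rw [hd, Nat.card_eq_fintype_card, ← SimpleGraph.edgeFinset_card]
    field_simp
  have hYn : 2 * (#Y : ℝ) ≤ n := by exact_mod_cast hY
  have hZn : (n : ℝ) ≤ 2 * #Z := by exact_mod_cast hZ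
  set B := {z ∈ Z | (G.degree z : ℝ) ≤ 4 * d}
  set w : V → ℝ := fun y => #{b ∈ B | G.Adj y b}
  have hB : (#Z : ℝ) - #Y / 7 ≤ #B := hYZ.card_sub_le_card_filter_degree_le hmax hdpos
  have hwY : (#G.edgeFinset : ℝ) - 4 * d * #Y / 7 ≤ ∑ y ∈ Y, w y :=
    hYZ.card_edgeFinset_sub_le_sum_card_filter_adj hmax
  have hwY' := sum_sub_mul_card_le_sum_filter_le Y w (c := d / 32) (by positivity)
  obtain ⟨j, A, hAY, hA, hwA⟩ := exists_dyadic_class Y w (c := d / 32) (by positivity)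
    (sum_two_rpow_mul_two_pow_le (k := k) (by exact_mod_cast hk) hn.le)
    (by nlinarith [mul_le_mul_of_nonneg_left hYn hdpos.le])
  have hAB : Disjoint A B := (disjoint_coe.1 hYZ.disjoint).mono hAY (filter_subset _ Z)
  refine ⟨G.betweenSubgraph A B, A, B, j + 1, by omega, rfl, disjoint_coe.2 hAB,
    fun u v huv => huv.2, by simpa using hA, by simp; linarith, fun a ha => ?_, fun b hb => ?_⟩
  · rw [G.card_neighborSet_betweenSubgraph_of_mem_left hAB ha,
      show ((j + 1 : ℕ) : ℤ) - 6 = (j : ℤ) - 5 by push_cast; ring, zpow_sub₀ two_ne_zero,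
      zpow_sub₀ two_ne_zero, zpow_natCast, zpow_natCast]
    constructor <;> linarith [hwA a ha]
  · exact (Nat.cast_le.2 ((G.betweenSubgraph A B).card_neighborSet_le_degree b)).trans
      (mem_filter.1 hb).2
end

section
/- Let G be a bipartite graph with bipartition (A, B), let d_A be the average of the degrees of the vertices in A, and let d_B be the average of the degrees of the vertices in B. Then for every natural number k ≥ 1, |Hom(C_{2k}, G)| ≥ d_A^k · d_B^k. -/
open Finset Matrix

section aux
variable {V : Type*} [Fintype V] [DecidableEq V]

lemma chain_sum (N : Matrix V V ℝ) (n : ℕ) (b : V) :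
    ∀ a : V, ∑ f : Fin (n+1) → V, ((if f 0 = a then (1:ℝ) else 0) *
      ∏ i : Fin n, N (f i.castSucc) (f i.succ)) *
      (if f (Fin.last n) = b then 1 else 0) = (N ^ n) a b := by
  induction n with
  | zero =>
    intro a
    rw [pow_zero, ← (Equiv.funUnique (Fin 1) V).symm.sum_comp]
    simp [Matrix.one_apply, eq_comm]
  | succ n ih =>
    intro a
    rw [← (Fin.consEquiv (fun _ : Fin (n+2) => V)).sum_comp, Fintype.sum_prod_type]
    simp only [Fin.consEquiv_apply]
    have hcons : ∀ (x : V) (g : Fin (n+1) → V),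
        (∏ i : Fin (n+1), N ((Fin.cons x g : Fin (n+2) → V) i.castSucc)
          ((Fin.cons x g : Fin (n+2) → V) i.succ))
        = N x (g 0) * ∏ i : Fin n, N (g i.castSucc) (g i.succ) := by
      intro x g
      rw [Fin.prod_univ_succ]
      have e1 : (Fin.cons x g : Fin (n+2) → V) (Fin.castSucc 0) = x := by simp
      have e2 : (Fin.cons x g : Fin (n+2) → V) (Fin.succ 0) = g 0 := by
        rw [Fin.cons_succ]
      rw [e1, e2]
      congr 1
    have hl : ∀ (x : V) (g : Fin (n+1) → V),
        (Fin.cons x g : Fin (n+2) → V) (Fin.last (n+1)) = g (Fin.last n) := by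
      intro x g
      rw [← Fin.succ_last, Fin.cons_succ]
    have step : ∀ x : V, (∑ g : Fin (n+1) → V,
        ((if (Fin.cons x g : Fin (n+2) → V) 0 = a then (1:ℝ) else 0) *
          ∏ i : Fin (n+1), N ((Fin.cons x g : Fin (n+2) → V) i.castSucc)
            ((Fin.cons x g : Fin (n+2) → V) i.succ)) *
        (if (Fin.cons x g : Fin (n+2) → V) (Fin.last (n+1)) = b then 1 else 0))
        = if x = a then (∑ g : Fin (n+1) → V,
            (N x (g 0) * ∏ i : Fin n, N (g i.castSucc) (g i.succ)) *
            (if g (Fin.last n) = b then 1 else 0)) else 0 := by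
      intro x
      split_ifs with hx
      · apply Finset.sum_congr rfl
        intro g _
        rw [Fin.cons_zero, hl, hcons, if_pos hx, one_mul]
      · apply Finset.sum_eq_zero
        intro g _
        rw [Fin.cons_zero, if_neg hx, zero_mul, zero_mul]
    rw [Finset.sum_congr rfl (fun x _ => step x), Finset.sum_ite_eq' Finset.univ a,
      if_pos (Finset.mem_univ a)]
    rw [pow_succ', Matrix.mul_apply]
    have expand : ∀ c : V, N a c * (N ^ n) c b = ∑ g : Fin (n+1) → V,
        N a c * (((if g 0 = c then (1:ℝ) else 0) *
          ∏ i : Fin n, N (g i.castSucc) (g i.succ)) *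
          (if g (Fin.last n) = b then 1 else 0)) := by
      intro c
      rw [← Finset.mul_sum, ih c]
    rw [Finset.sum_congr rfl (fun c _ => expand c), Finset.sum_comm]
    apply Finset.sum_congr rfl
    intro g _
    have collapse : ∀ c : V, N a c * (((if g 0 = c then (1:ℝ) else 0) *
          ∏ i : Fin n, N (g i.castSucc) (g i.succ)) *
          (if g (Fin.last n) = b then 1 else 0))
        = if g 0 = c then N a c * ((∏ i : Fin n, N (g i.castSucc) (g i.succ)) *
            (if g (Fin.last n) = b then 1 else 0)) else 0 := by
      intro c
      split_ifs <;> ring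
    rw [Finset.sum_congr rfl (fun c _ => collapse c), Finset.sum_ite_eq Finset.univ (g 0),
      if_pos (Finset.mem_univ _)]
    ring


def zmodFinEquiv (n : ℕ) [NeZero n] : Fin n ≃ ZMod n :=
  ⟨fun j => ((j.val : ℕ) : ZMod n), fun i => ⟨i.val, ZMod.val_lt i⟩,
    fun j => Fin.ext (by simp [ZMod.val_natCast, Nat.mod_eq_of_lt j.isLt]),
    fun i => ZMod.natCast_rightInverse i⟩

lemma trace_pow_eq_cycle_sum (N : Matrix V V ℝ) (n : ℕ) [NeZero n] :
    (N ^ n).trace = ∑ v : ZMod n → V, ∏ i : ZMod n, N (v i) (v (i + 1)) := by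
  classical
  have h1 : (N ^ n).trace = ∑ f : Fin (n+1) → V,
      (if f 0 = f (Fin.last n) then ∏ i : Fin n, N (f i.castSucc) (f i.succ) else 0) := by
    simp only [Matrix.trace, Matrix.diag]
    rw [Finset.sum_congr rfl (fun a (_ : a ∈ Finset.univ) => (chain_sum N n a a).symm),
      Finset.sum_comm]
    apply Finset.sum_congr rfl
    intro f _
    have key : ∀ a : V, ((if f 0 = a then (1:ℝ) else 0) *
        ∏ i : Fin n, N (f i.castSucc) (f i.succ)) *
        (if f (Fin.last n) = a then 1 else 0)
        = if f 0 = a then (if f 0 = f (Fin.last n)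
            then ∏ i : Fin n, N (f i.castSucc) (f i.succ) else 0) else 0 := by
      intro a
      split_ifs with h1 h2 <;> simp_all
    rw [Finset.sum_congr rfl (fun a _ => key a), Finset.sum_ite_eq Finset.univ (f 0),
      if_pos (Finset.mem_univ _)]
  rw [h1]
  have hn : 0 < n := Nat.pos_of_ne_zero (NeZero.ne n)
  -- bijection between closed chains and cyclic functions
  rw [← Finset.sum_filter]
  apply Finset.sum_nbij' (i := fun f => fun i : ZMod n => f ⟨i.val, (ZMod.val_lt i).trans (Nat.lt_succ_self n)⟩)
    (j := fun v => fun j : Fin (n+1) => v (j.val : ℕ))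
  · intro f hf
    exact Finset.mem_univ _
  · intro v hv
    simp only [Finset.mem_filter, Finset.mem_univ, true_and]
    show v ((0 : Fin (n+1)).val : ℕ) = v ((Fin.last n).val : ℕ)
    norm_num [Fin.last]
  · intro f hf
    funext j
    simp only [Finset.mem_filter, Finset.mem_univ, true_and] at hf
    by_cases hj : (j : ℕ) < n
    · exact congrArg f (Fin.ext (by simp [ZMod.val_natCast, Nat.mod_eq_of_lt hj]))
    · have hj' : (j : ℕ) = n := Nat.le_antisymm (Nat.lt_succ_iff.mp j.isLt) (Nat.le_of_not_lt hj)
      have hjl : j = Fin.last n := Fin.ext (by simpa [Fin.last])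
      rw [hjl, ← hf]
      exact congrArg f (Fin.ext (by simp [hj', ZMod.val_natCast]))
  · intro v hv
    funext i
    exact congrArg v (ZMod.natCast_rightInverse i)
  · intro f hf
    simp only [Finset.mem_filter, Finset.mem_univ, true_and] at hf
    refine Fintype.prod_equiv (zmodFinEquiv n) _ _ ?_
    intro j
    have hval : ∀ (m : ℕ) (hm : m < n+1) (w : Fin (n+1)), m = w.val →
        f ⟨m, hm⟩ = f w := by
      intro m hm w hw
      exact congrArg f (Fin.ext hw)
    have he : zmodFinEquiv n j = ((j.val : ℕ) : ZMod n) := rfl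
    simp only [he]
    rw [hval (((j.val : ℕ) : ZMod n)).val _ j.castSucc
      (by simp [ZMod.val_natCast, Nat.mod_eq_of_lt (j.isLt)])]
    by_cases hj : (j : ℕ) + 1 < n
    · rw [hval ((((j.val : ℕ) : ZMod n) + 1)).val _ j.succ ?_]
      have : (((j.val : ℕ) : ZMod n) + 1) = (((j.val + 1 : ℕ)) : ZMod n) := by push_cast; ring
      rw [this, ZMod.val_natCast, Nat.mod_eq_of_lt hj]
      rfl
    · have hj1 : (j : ℕ) + 1 = n := Nat.le_antisymm (Nat.succ_le_of_lt j.isLt) (Nat.le_of_not_lt hj)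
      have hz : (((j.val : ℕ) : ZMod n) + 1) = 0 := by
        have : (((j.val : ℕ) : ZMod n) + 1) = (((j.val + 1 : ℕ)) : ZMod n) := by push_cast; ring
        rw [this, hj1, ZMod.natCast_self]
      have hsucc : j.succ = Fin.last n := Fin.ext (by simp [Fin.last, hj1])
      rw [hval ((((j.val : ℕ) : ZMod n) + 1)).val _ 0 (by rw [hz]; simp [ZMod.val_zero])]
      rw [hf, hsucc]

lemma card_closed_walks (G : SimpleGraph V) [DecidableRel G.Adj] (n : ℕ) [NeZero n] :
    (Nat.card {v : ZMod n → V // ∀ i, G.Adj (v i) (v (i + 1))} : ℝ)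
      = ((G.adjMatrix ℝ) ^ n).trace := by
  classical
  rw [trace_pow_eq_cycle_sum, Nat.card_eq_fintype_card, Fintype.card_subtype,
    ← Finset.sum_boole]
  apply Finset.sum_congr rfl
  intro v _
  by_cases h : ∀ i, G.Adj (v i) (v (i+1))
  · rw [if_pos h]
    exact (Finset.prod_eq_one fun i _ => by
      rw [SimpleGraph.adjMatrix_apply, if_pos (h i)]).symm
  · rw [if_neg h]
    push_neg at h
    obtain ⟨i, hi⟩ := h
    exact (Finset.prod_eq_zero (Finset.mem_univ i) (by
      rw [SimpleGraph.adjMatrix_apply, if_neg hi])).symm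

lemma dot_shift (M : Matrix V V ℝ) (hM : Mᵀ = M) (a b : ℕ) (x : V → ℝ) :
    (M ^ a *ᵥ x) ⬝ᵥ (M ^ b *ᵥ x) = x ⬝ᵥ (M ^ (a+b) *ᵥ x) := by
  have hsa : (M ^ a)ᵀ = M ^ a := by rw [Matrix.transpose_pow, hM]
  rw [dotProduct_comm, Matrix.dotProduct_mulVec, ← Matrix.mulVec_transpose, hsa,
    dotProduct_comm, Matrix.mulVec_mulVec, ← pow_add]

lemma trace_sq_eq (M : Matrix V V ℝ) (hM : Mᵀ = M) (m : ℕ) :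
    (M ^ (2*m)).trace = ∑ u : V, ∑ w : V, (M ^ m) u w ^ 2 := by
  have h2 : 2 * m = m + m := by ring
  rw [h2, pow_add, Matrix.trace]
  simp only [Matrix.diag, Matrix.mul_apply]
  apply Finset.sum_congr rfl
  intro u _
  apply Finset.sum_congr rfl
  intro w _
  have ht : (M ^ m)ᵀ = M ^ m := by rw [Matrix.transpose_pow, hM]
  have hs : (M ^ m) w u = (M ^ m) u w :=
    (congrFun (congrFun ht.symm w) u).trans rfl
  rw [hs]
  ring

end aux

/-- Let `G` be a bipartite graph with bipartition `(A, B)`, let `d_A` be the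
average of the degrees of the vertices in `A`, and `d_B` the average of the degrees of the
vertices in `B`. Then for every natural number `k ≥ 1`, `|Hom(C_{2k}, G)| ≥ d_A^k · d_B^k`,
where `Hom(C_{2k}, G)` is identified with the set of closed `2k`-walks in `G`. -/
theorem hom_cycle_ge_of_bipartite {V : Type*} [Fintype V] [DecidableEq V]
    (G : SimpleGraph V) [DecidableRel G.Adj] (A B : Finset V)
    (hpart : ∀ v : V, (v ∈ A ↔ v ∉ B))
    (hbip : ∀ ⦃u v : V⦄, G.Adj u v → (u ∈ A ∧ v ∈ B) ∨ (u ∈ B ∧ v ∈ A))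
    (k : ℕ) (hk : 1 ≤ k) (dA dB : ℝ)
    (hdA : dA = (∑ a ∈ A, (G.degree a : ℝ)) / (A.card : ℝ))
    (hdB : dB = (∑ b ∈ B, (G.degree b : ℝ)) / (B.card : ℝ)) :
    dA ^ k * dB ^ k ≤
      (Nat.card {v : ZMod (2 * k) → V // ∀ i, G.Adj (v i) (v (i + 1))} : ℝ) := by
  classical
  haveI : NeZero (2 * k) := ⟨by omega⟩
  set M : Matrix V V ℝ := G.adjMatrix ℝ with hMdef
  have hMsym : Mᵀ = M := G.isSymm_adjMatrix
  rw [card_closed_walks G (2*k), ← mul_pow]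
  have hdA0 : 0 ≤ dA := by
    rw [hdA]
    positivity
  have hdB0 : 0 ≤ dB := by
    rw [hdB]
    positivity
  have htr : (M ^ (2*k)).trace = ∑ u : V, ∑ w : V, (M ^ k) u w ^ 2 := trace_sq_eq M hMsym k
  by_cases hzero : dA * dB = 0
  · rw [hzero, zero_pow (by omega : k ≠ 0), htr]
    positivity
  have hdApos : 0 < dA := lt_of_le_of_ne hdA0 (Ne.symm (fun h => hzero (by rw [h, zero_mul])))
  have hdBpos : 0 < dB := lt_of_le_of_ne hdB0 (Ne.symm (fun h => hzero (by rw [h, mul_zero])))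
  have hAcard : 0 < (A.card : ℝ) := by
    rcases Nat.eq_zero_or_pos A.card with h | h
    · exfalso
      rw [hdA, h] at hdApos
      norm_num at hdApos
    · exact_mod_cast h
  have hBcard : 0 < (B.card : ℝ) := by
    rcases Nat.eq_zero_or_pos B.card with h | h
    · exfalso
      rw [hdB, h] at hdBpos
      norm_num at hdBpos
    · exact_mod_cast h
  have hsumB : 0 < ∑ b ∈ B, (G.degree b : ℝ) := by
    by_contra h
    push_neg at h
    have : dB ≤ 0 := by
      rw [hdB]
      exact div_nonpos_of_nonpos_of_nonneg h hBcard.le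
    linarith
  -- the test vector and the moments
  set x : V → ℝ := fun u => if u ∈ A then (1:ℝ) else 0 with hxdef
  set s : ℕ → ℝ := fun m => (M ^ m *ᵥ x) ⬝ᵥ (M ^ m *ᵥ x) with hsdef
  have hs_sq : ∀ m, s m = ∑ u : V, ((M ^ m *ᵥ x) u) ^ 2 := by
    intro m
    simp [hsdef, dotProduct, sq]
  have hs_nonneg : ∀ m, 0 ≤ s m := by
    intro m
    rw [hs_sq m]
    positivity
  have cs : ∀ y z : V → ℝ, (y ⬝ᵥ z)^2 ≤ (y ⬝ᵥ y) * (z ⬝ᵥ z) := by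
    intro y z
    have h := Finset.sum_mul_sq_le_sq_mul_sq Finset.univ y z
    simpa [dotProduct, sq] using h
  have hs0 : s 0 = (A.card : ℝ) := by
    simp only [hsdef, pow_zero, Matrix.one_mulVec, hxdef, dotProduct]
    rw [Finset.sum_congr rfl (fun u _ => by
      show (if u ∈ A then (1:ℝ) else 0) * (if u ∈ A then (1:ℝ) else 0)
        = if u ∈ A then (1:ℝ) else 0
      split_ifs <;> norm_num)]
    rw [Finset.sum_boole]
    congr 1
    simp [Finset.filter_mem_eq_inter]
  have hs0pos : 0 < s 0 := by rw [hs0]; exact hAcard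
  -- M *ᵥ x
  have hMx : ∀ u : V, (M *ᵥ x) u = if u ∈ B then (G.degree u : ℝ) else 0 := by
    intro u
    rw [hMdef, SimpleGraph.adjMatrix_mulVec_apply]
    by_cases hu : u ∈ B
    · rw [if_pos hu]
      have hall : ∀ w ∈ G.neighborFinset u, x w = 1 := by
        intro w hw
        rw [SimpleGraph.mem_neighborFinset] at hw
        rcases hbip hw with ⟨h1, _⟩ | ⟨_, h2⟩
        · exact absurd hu ((hpart u).mp h1)
        · simp [hxdef, h2]
      rw [Finset.sum_congr rfl hall, Finset.sum_const, nsmul_eq_mul, mul_one,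
        SimpleGraph.card_neighborFinset_eq_degree]
    · rw [if_neg hu]
      have hu' : u ∈ A := by
        by_contra h
        exact h ((hpart u).mpr hu)
      apply Finset.sum_eq_zero
      intro w hw
      rw [SimpleGraph.mem_neighborFinset] at hw
      rcases hbip hw with ⟨_, h2⟩ | ⟨h1, _⟩
      · have hwA : w ∉ A := fun hw' => ((hpart w).mp hw') h2
        simp [hxdef, hwA]
      · exact absurd h1 ((hpart u).mp hu')
  -- s 1
  have hs1 : s 1 = ∑ b ∈ B, (G.degree b : ℝ) ^ 2 := by
    rw [hs_sq 1]
    have hterm : ∀ u : V, (M ^ 1 *ᵥ x) u ^ 2 = if u ∈ B then (G.degree u : ℝ) ^ 2 else 0 := by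
      intro u
      rw [pow_one, hMx u]
      split_ifs <;> norm_num
    rw [Finset.sum_congr rfl (fun u _ => hterm u), Finset.sum_ite_mem, Finset.univ_inter]
  -- degree double counting
  have hNA : ∀ a ∈ A, G.neighborFinset a = B.filter (fun w => G.Adj a w) := by
    intro a ha
    ext w
    rw [SimpleGraph.mem_neighborFinset, Finset.mem_filter]
    constructor
    · intro hw
      rcases hbip hw with ⟨_, h2⟩ | ⟨h1, _⟩
      · exact ⟨h2, hw⟩
      · exact absurd h1 ((hpart a).mp ha)
    · exact fun h => h.2
  have hNB : ∀ b ∈ B, G.neighborFinset b = A.filter (fun w => G.Adj w b) := by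
    intro b hb
    ext w
    rw [SimpleGraph.mem_neighborFinset, Finset.mem_filter]
    constructor
    · intro hw
      rcases hbip hw with ⟨h1, _⟩ | ⟨_, h2⟩
      · exact absurd ((hpart b).mp h1) (fun hh => hh hb)
      · exact ⟨h2, hw.symm⟩
    · exact fun h => h.2.symm
  have hdeg_expand : ∀ a ∈ A, (G.degree a : ℝ) = ∑ b ∈ B, (if G.Adj a b then (1:ℝ) else 0) := by
    intro a ha
    rw [Finset.sum_ite, Finset.sum_const, Finset.sum_const, nsmul_eq_mul, nsmul_eq_mul,
      mul_one, mul_zero, add_zero, ← hNA a ha, SimpleGraph.card_neighborFinset_eq_degree]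
  have hdeg_expandB : ∀ b ∈ B, (G.degree b : ℝ) = ∑ a ∈ A, (if G.Adj a b then (1:ℝ) else 0) := by
    intro b hb
    rw [Finset.sum_ite, Finset.sum_const, Finset.sum_const, nsmul_eq_mul, nsmul_eq_mul,
      mul_one, mul_zero, add_zero, ← hNB b hb, SimpleGraph.card_neighborFinset_eq_degree]
  have hedges : ∑ a ∈ A, (G.degree a : ℝ) = ∑ b ∈ B, (G.degree b : ℝ) := by
    rw [Finset.sum_congr rfl hdeg_expand, Finset.sum_congr rfl hdeg_expandB, Finset.sum_comm]
  -- s 1 positive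
  have hcsB : (∑ b ∈ B, (G.degree b : ℝ)) ^ 2 ≤ s 1 * (B.card : ℝ) := by
    have h := Finset.sum_mul_sq_le_sq_mul_sq B (fun b => (G.degree b : ℝ)) (fun _ => (1:ℝ))
    simp only [mul_one, one_pow] at h
    rw [Finset.sum_const, nsmul_eq_mul, mul_one] at h
    rw [hs1]
    exact h
  have hs1pos : 0 < s 1 := by
    nlinarith [hsumB, hcsB, hBcard]
  -- Cauchy-Schwarz step for moments
  have hshift : ∀ a b : ℕ, (M ^ a *ᵥ x) ⬝ᵥ (M ^ b *ᵥ x) = x ⬝ᵥ (M ^ (a+b) *ᵥ x) :=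
    fun a b => dot_shift M hMsym a b x
  have hCSstep : ∀ m : ℕ, s (m+1) ^ 2 ≤ s (m+2) * s m := by
    intro m
    have h1 : s (m+1) = (M ^ (m+2) *ᵥ x) ⬝ᵥ (M ^ m *ᵥ x) := by
      rw [hsdef]
      show (M ^ (m+1) *ᵥ x) ⬝ᵥ (M ^ (m+1) *ᵥ x) = _
      rw [hshift (m+1) (m+1), hshift (m+2) m]
      have he : m + 1 + (m + 1) = m + 2 + m := by ring
      rw [he]
    rw [h1]
    exact cs _ _
  -- positivity and ratio monotonicity
  have P : ∀ m : ℕ, 0 < s m ∧ s 1 * s m ≤ s 0 * s (m+1) := by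
    intro m
    induction m with
    | zero => exact ⟨hs0pos, le_of_eq (mul_comm _ _)⟩
    | succ m ih =>
      have hsm1 : 0 < s (m+1) := by
        nlinarith [ih.1, ih.2, hs1pos, hs0pos]
      refine ⟨hsm1, ?_⟩
      have hcs2 := hCSstep m
      have h3 : s 1 * s (m+1) * s (m+1) ≤ s 0 * s (m+2) * s (m+1) := by
        nlinarith [hs_nonneg (m+2), ih.2, hs1pos]
      exact le_of_mul_le_mul_right h3 hsm1
  have Q : ∀ m : ℕ, s 1 ^ m * s 0 ≤ s m * s 0 ^ m := by
    intro m
    induction m with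
    | zero => simp
    | succ m ih =>
      have h1 : s 1 ^ (m+1) * s 0 = s 1 * (s 1 ^ m * s 0) := by ring
      have h2 : s 1 * (s 1 ^ m * s 0) ≤ s 1 * (s m * s 0 ^ m) :=
        mul_le_mul_of_nonneg_left ih hs1pos.le
      have h3 : s 1 * (s m * s 0 ^ m) = (s 1 * s m) * s 0 ^ m := by ring
      have h4 : (s 1 * s m) * s 0 ^ m ≤ (s 0 * s (m+1)) * s 0 ^ m :=
        mul_le_mul_of_nonneg_right (P m).2 (pow_nonneg hs0pos.le m)
      calc s 1 ^ (m+1) * s 0 = s 1 * (s 1 ^ m * s 0) := by ring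
        _ ≤ s 1 * (s m * s 0 ^ m) := h2
        _ = (s 1 * s m) * s 0 ^ m := by ring
        _ ≤ (s 0 * s (m+1)) * s 0 ^ m := h4
        _ = s (m+1) * s 0 ^ (m+1) := by ring
  -- trace bound
  have hx2 : s 0 = ∑ w : V, x w ^ 2 := by
    rw [hs_sq 0]
    simp [Matrix.one_mulVec]
  have hrow : ∀ u : V, ((M ^ k *ᵥ x) u) ^ 2 ≤ (∑ w : V, (M ^ k) u w ^ 2) * s 0 := by
    intro u
    have h := Finset.sum_mul_sq_le_sq_mul_sq Finset.univ (fun w => (M ^ k) u w) x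
    have hmv : (M ^ k *ᵥ x) u = ∑ w : V, (M ^ k) u w * x w := by
      simp [Matrix.mulVec, dotProduct]
    rw [hmv, hx2]
    exact h
  have htrace_bound : s k ≤ (M ^ (2*k)).trace * s 0 := by
    rw [hs_sq k, htr, Finset.sum_mul]
    exact Finset.sum_le_sum (fun u _ => hrow u)
  -- density ratio bound
  have hratio : dA * dB * s 0 ≤ s 1 := by
    rw [hdA, hdB, hedges, hs0, div_mul_div_comm, div_mul_eq_mul_div,
      div_le_iff₀ (by positivity)]
    calc (∑ b ∈ B, (G.degree b : ℝ)) * (∑ b ∈ B, (G.degree b : ℝ)) * (A.card : ℝ)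
        = (∑ b ∈ B, (G.degree b : ℝ)) ^ 2 * (A.card : ℝ) := by ring
      _ ≤ (s 1 * (B.card : ℝ)) * (A.card : ℝ) := mul_le_mul_of_nonneg_right hcsB hAcard.le
      _ = s 1 * ((A.card : ℝ) * (B.card : ℝ)) := by ring
  calc (dA * dB) ^ k ≤ (s 1 / s 0) ^ k := by
        apply pow_le_pow_left₀ (mul_nonneg hdA0 hdB0)
        rw [le_div_iff₀ hs0pos]
        exact hratio
    _ ≤ s k / s 0 := by
        rw [div_pow, div_le_div_iff₀ (pow_pos hs0pos k) hs0pos]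
        exact Q k
    _ ≤ (M ^ (2*k)).trace := by
        rw [div_le_iff₀ hs0pos]
        exact htrace_bound
end

section
/- For every n-vertex graph G with edge density p = 2e(G)/n² and every natural number k ≥ 1, the number of homomorphisms from the cycle C_{2k} to G satisfies |Hom(C_{2k}, G)| ≥ n^{2k}·p^{2k}; equivalently, the number of closed 2k-walks in G is at least (2e(G)/n)^{2k}. -/
open Finset Matrix

section Aux
variable {V : Type*} [Fintype V] [DecidableEq V]

private lemma pow_apply_chain' (M : Matrix V V ℝ) :
    ∀ (m : ℕ) (u w : V), (M ^ m) u w =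
      ∑ f : Fin m → V, if (Fin.cons u f : Fin (m+1) → V) (Fin.last m) = w then
        ∏ i : Fin m, M ((Fin.cons u f : Fin (m+1) → V) i.castSucc) (f i) else 0 := by
  intro m
  induction m with
  | zero =>
    intro u w
    simp [Matrix.one_apply, eq_comm]
  | succ m ih =>
    intro u w
    rw [pow_succ', Matrix.mul_apply]
    rw [← (Fin.consEquiv fun _ : Fin (m+1) => V).sum_comp, Fintype.sum_prod_type]
    refine Finset.sum_congr rfl fun x _ => ?_
    rw [ih, Finset.mul_sum]
    refine Finset.sum_congr rfl fun f _ => ?_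
    simp only [Fin.consEquiv_apply]
    rw [← Fin.succ_last, Fin.cons_succ, Fin.prod_univ_succ]
    simp only [Fin.castSucc_zero, Fin.cons_zero, Fin.cons_succ, ← Fin.succ_castSucc, mul_ite,
      mul_zero]
    rfl

private lemma trace_pow_chain' (M : Matrix V V ℝ) (m : ℕ) :
    Matrix.trace (M ^ (m+1)) =
      ∑ v : Fin (m+1) → V, ∏ i : Fin (m+1), M (v i) (v (i + 1)) := by
  rw [Matrix.trace]
  simp only [Matrix.diag_apply]
  calc ∑ u, (M ^ (m+1)) u u
      = ∑ u, ∑ f : Fin (m+1) → V, if f (Fin.last m) = u then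
          ∏ i : Fin (m+1), M ((Fin.cons u f : Fin (m+2) → V) i.castSucc) (f i) else 0 := by
        refine Finset.sum_congr rfl fun u _ => ?_
        rw [pow_apply_chain' M (m+1) u u]
        refine Finset.sum_congr rfl fun f _ => ?_
        rw [← Fin.succ_last, Fin.cons_succ]
    _ = ∑ f : Fin (m+1) → V,
          ∏ i : Fin (m+1), M ((Fin.cons (f (Fin.last m)) f : Fin (m+2) → V) i.castSucc) (f i) := by
        rw [Finset.sum_comm]
        refine Finset.sum_congr rfl fun f _ => ?_
        rw [Finset.sum_ite_eq univ (f (Fin.last m))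
          (fun u => ∏ i : Fin (m+1), M ((Fin.cons u f : Fin (m+2) → V) i.castSucc) (f i))]
        simp
    _ = ∑ v : Fin (m+1) → V, ∏ i : Fin (m+1), M (v i) (v (i + 1)) := by
        rw [← Equiv.sum_comp (Equiv.arrowCongr (Equiv.addRight (1 : Fin (m+1))).symm (Equiv.refl V))
          (fun f => ∏ i : Fin (m+1),
            M ((Fin.cons (f (Fin.last m)) f : Fin (m+2) → V) i.castSucc) (f i))]
        refine Finset.sum_congr rfl fun v _ => ?_
        have hfv : ∀ j : Fin (m+1),
            (Equiv.arrowCongr (Equiv.addRight (1 : Fin (m+1))).symm (Equiv.refl V)) v j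
              = v (j + 1) := by
          intro j; simp [Equiv.arrowCongr]
        have hcons : ∀ i : Fin (m+1),
            (Fin.cons ((Equiv.arrowCongr (Equiv.addRight (1 : Fin (m+1))).symm (Equiv.refl V)) v
                (Fin.last m))
              ((Equiv.arrowCongr (Equiv.addRight (1 : Fin (m+1))).symm (Equiv.refl V)) v) :
                Fin (m+2) → V) i.castSucc = v i := by
          intro i
          induction i using Fin.cases with
          | zero => rw [Fin.castSucc_zero, Fin.cons_zero, hfv, Fin.last_add_one]
          | succ j => rw [← Fin.succ_castSucc, Fin.cons_succ, hfv, Fin.coeSucc_eq_succ]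
        refine Finset.prod_congr rfl fun i _ => ?_
        rw [hcons, hfv]

private lemma sum_pow_add_eq' (M : Matrix V V ℝ) (hM : M.IsSymm) (p q : ℕ) :
    (∑ u, ∑ w, (M ^ (p + q)) u w) =
      ∑ x, (∑ u, (M ^ p) u x) * (∑ u, (M ^ q) u x) := by
  have hsym : ∀ (r : ℕ) (a b : V), (M ^ r) a b = (M ^ r) b a := by
    intro r a b
    have := (hM.pow r)
    rw [Matrix.IsSymm] at this
    conv_lhs => rw [← this]
    rfl
  calc (∑ u, ∑ w, (M ^ (p + q)) u w)
      = ∑ u, ∑ w, ∑ x, (M ^ p) u x * (M ^ q) x w := by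
        simp [pow_add, Matrix.mul_apply]
    _ = ∑ u, ∑ x, ∑ w, (M ^ p) u x * (M ^ q) x w := by
        exact Finset.sum_congr rfl fun u _ => Finset.sum_comm
    _ = ∑ x, ∑ u, ∑ w, (M ^ p) u x * (M ^ q) x w := Finset.sum_comm
    _ = ∑ x, (∑ u, (M ^ p) u x) * (∑ w, (M ^ q) x w) := by
        refine Finset.sum_congr rfl fun x _ => ?_
        rw [Finset.sum_mul_sum]
    _ = ∑ x, (∑ u, (M ^ p) u x) * (∑ u, (M ^ q) u x) := by
        refine Finset.sum_congr rfl fun x _ => ?_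
        congr 1
        exact Finset.sum_congr rfl fun w _ => hsym q x w

private lemma cs_step' (M : Matrix V V ℝ) (hM : M.IsSymm) (p q : ℕ) :
    (∑ u, ∑ w, (M ^ (p + q)) u w) ^ 2 ≤
      (∑ u, ∑ w, (M ^ (2 * p)) u w) * (∑ u, ∑ w, (M ^ (2 * q)) u w) := by
  rw [sum_pow_add_eq' M hM p q, show 2 * p = p + p from by ring, show 2 * q = q + q from by ring,
    sum_pow_add_eq' M hM p p, sum_pow_add_eq' M hM q q]
  have := Finset.sum_mul_sq_le_sq_mul_sq univ (fun x => ∑ u, (M ^ p) u x)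
    (fun x => ∑ u, (M ^ q) u x)
  simpa [sq] using this

private lemma sum_le_card_mul_trace' (M : Matrix V V ℝ) (hM : M.IsSymm) (k : ℕ) :
    (∑ u, ∑ w, (M ^ (2 * k)) u w) ≤ (Fintype.card V : ℝ) * Matrix.trace (M ^ (2 * k)) := by
  have hsym : ∀ (r : ℕ) (a b : V), (M ^ r) a b = (M ^ r) b a := by
    intro r a b
    have := (hM.pow r)
    rw [Matrix.IsSymm] at this
    conv_lhs => rw [← this]
    rfl
  have htr : Matrix.trace (M ^ (2 * k)) = ∑ x, ∑ u, ((M ^ k) u x) ^ 2 := by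
    rw [Matrix.trace, show 2 * k = k + k from by ring, pow_add]
    simp only [Matrix.diag_apply, Matrix.mul_apply]
    refine Finset.sum_congr rfl fun x _ => Finset.sum_congr rfl fun u _ => ?_
    rw [sq, hsym k x u]
  rw [htr, show 2 * k = k + k from by ring, sum_pow_add_eq' M hM k k, Finset.mul_sum]
  refine Finset.sum_le_sum fun x _ => ?_
  have := Finset.sum_mul_sq_le_sq_mul_sq univ (fun u => (M ^ k) u x) (fun _ => (1 : ℝ))
  simp only [mul_one, one_pow, Finset.sum_const, Finset.card_univ, nsmul_eq_mul] at this
  calc (∑ u, (M ^ k) u x) * (∑ u, (M ^ k) u x) = (∑ u, (M ^ k) u x) ^ 2 := by rw [sq]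
    _ ≤ (∑ u, ((M ^ k) u x) ^ 2) * (Fintype.card V : ℝ) := this
    _ = (Fintype.card V : ℝ) * ∑ u, ((M ^ k) u x) ^ 2 := by ring

end Aux

/-- (Sidorenko's conjecture for even cycles.) For every `n`-vertex graph `G`
with edge density `p = 2e(G)/n²` and every natural number `k ≥ 1`, the number of homomorphisms
from `C_{2k}` to `G` (i.e. the number of closed `2k`-walks in `G`) satisfies
`|Hom(C_{2k}, G)| ≥ n^{2k}·p^{2k} = (2e(G)/n)^{2k}`. -/
theorem sidorenko_even_cycles {V : Type*} [Fintype V] (G : SimpleGraph V)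
    (k : ℕ) (hk : 1 ≤ k) :
    (2 * (Nat.card G.edgeSet : ℝ) / (Fintype.card V : ℝ)) ^ (2 * k) ≤
      (Nat.card {v : ZMod (2 * k) → V // ∀ i, G.Adj (v i) (v (i + 1))} : ℝ) := by
  classical
  by_cases hE : Nat.card G.edgeSet = 0
  · rw [hE]
    norm_num
    rw [zero_pow (by omega : 2 * k ≠ 0)]
    exact Nat.cast_nonneg _
  by_cases hV : Fintype.card V = 0
  · rw [hV]
    norm_num
    rw [zero_pow (by omega : 2 * k ≠ 0)]
    exact Nat.cast_nonneg _
  -- main case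
  obtain ⟨m, hm⟩ : ∃ m, 2 * k = m + 1 := ⟨2 * k - 1, by omega⟩
  set A : Matrix V V ℝ := G.adjMatrix ℝ with hA
  set n : ℝ := (Fintype.card V : ℝ) with hn_def
  have hn : 0 < n := by
    have : 0 < Fintype.card V := Nat.pos_of_ne_zero hV
    rw [hn_def]
    exact_mod_cast this
  set S : ℕ → ℝ := fun r => ∑ u, ∑ w, (A ^ r) u w with hS_def
  have hMsymm : A.IsSymm := G.isSymm_adjMatrix
  have hS0 : S 0 = n := by
    simp [hS_def, Matrix.one_apply, hn_def]
  have hS1 : S 1 = 2 * (Nat.card G.edgeSet : ℝ) := by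
    have hdeg : ∀ u, (∑ w, A u w) = (G.degree u : ℝ) := by
      intro u
      simp [hA, SimpleGraph.adjMatrix_apply, SimpleGraph.degree,
        SimpleGraph.neighborFinset_eq_filter, Finset.sum_boole]
    have : S 1 = ∑ u, (G.degree u : ℝ) := by
      simp only [hS_def, pow_one]
      exact Finset.sum_congr rfl fun u _ => hdeg u
    rw [this, ← Nat.cast_sum, SimpleGraph.sum_degrees_eq_twice_card_edges,
      SimpleGraph.edgeFinset_card, Nat.card_eq_fintype_card]
    push_cast
    ring
  set d : ℝ := 2 * (Nat.card G.edgeSet : ℝ) / n with hd_def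
  have hd : 0 < d := by
    apply div_pos _ hn
    have : 0 < Nat.card G.edgeSet := Nat.pos_of_ne_zero hE
    have : (0 : ℝ) < (Nat.card G.edgeSet : ℝ) := by exact_mod_cast this
    linarith
  have hS1' : S 1 = n * d := by
    rw [hS1, hd_def]
    field_simp
  have hCS : ∀ p q : ℕ, S (p + q) ^ 2 ≤ S (2 * p) * S (2 * q) :=
    fun p q => cs_step' A hMsymm p q
  have key : ∀ r : ℕ, n * d ^ (2 * r) ≤ S (2 * r) ∧ d ^ 2 * S (2 * r) ≤ S (2 * r + 2) := by
    intro r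
    induction r with
    | zero =>
      constructor
      · simp [hS0]
      · have h01 := hCS 0 1
        norm_num at h01
        rw [hS0] at h01 ⊢
        rw [hS1'] at h01
        have h2 : S 2 = S (2 * 1) := by norm_num
        nlinarith [hn, hd]
    | succ r ih =>
      obtain ⟨hP, hQ⟩ := ih
      have hSr_pos : 0 < S (2 * r) := lt_of_lt_of_le (by positivity) hP
      have hP' : n * d ^ (2 * (r + 1)) ≤ S (2 * (r + 1)) := by
        have : S (2 * (r + 1)) = S (2 * r + 2) := by ring_nf
        rw [this]
        calc n * d ^ (2 * (r + 1)) = d ^ 2 * (n * d ^ (2 * r)) := by ring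
          _ ≤ d ^ 2 * S (2 * r) := by nlinarith [hd]
          _ ≤ S (2 * r + 2) := hQ
      have hSr1_pos : 0 < S (2 * r + 2) := by
        calc (0:ℝ) < d ^ 2 * (n * d ^ (2 * r)) := by positivity
          _ ≤ d ^ 2 * S (2 * r) := by nlinarith [hd]
          _ ≤ S (2 * r + 2) := hQ
      refine ⟨hP', ?_⟩
      have h1 := hCS r (r + 2)
      have e1 : r + (r + 2) = 2 * r + 2 := by ring
      have e2 : 2 * (r + 2) = 2 * (r + 1) + 2 := by ring
      rw [e1, e2] at h1
      -- h1 : S (2r+2)^2 ≤ S (2r) * S (2(r+1)+2)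
      have h2 : d ^ 2 * S (2 * r) * S (2 * r + 2) ≤ S (2 * r + 2) ^ 2 := by
        nlinarith [hQ, hSr1_pos]
      have h3 : d ^ 2 * S (2 * r) * S (2 * r + 2) ≤ S (2 * r) * S (2 * (r + 1) + 2) :=
        le_trans h2 h1
      have : S (2 * (r + 1)) = S (2 * r + 2) := by ring_nf
      rw [this]
      nlinarith [h3, hSr_pos]
  have hPk : n * d ^ (2 * k) ≤ S (2 * k) := (key k).1
  have hT : S (2 * k) ≤ n * Matrix.trace (A ^ (2 * k)) := sum_le_card_mul_trace' A hMsymm k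
  have htrace : d ^ (2 * k) ≤ Matrix.trace (A ^ (2 * k)) := by
    have := le_trans hPk hT
    nlinarith [hn]
  -- counting
  have hcount : Matrix.trace (A ^ (2 * k)) =
      (Nat.card {v : ZMod (2 * k) → V // ∀ i, G.Adj (v i) (v (i + 1))} : ℝ) := by
    rw [hm, trace_pow_chain' A m]
    have hzmod : Nat.card {v : ZMod (m + 1) → V // ∀ i, G.Adj (v i) (v (i + 1))}
        = Nat.card {v : Fin (m + 1) → V // ∀ i, G.Adj (v i) (v (i + 1))} := rfl
    rw [hzmod, Nat.card_eq_fintype_card, Fintype.card_subtype]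
    rw [← Finset.sum_boole]
    refine Finset.sum_congr rfl fun v _ => ?_
    simp [hA, SimpleGraph.adjMatrix_apply, Finset.prod_boole]
  rw [← hcount]
  exact htrace
end
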